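/- arXiv:math/0701824 — 3 statements merged into one kernel-verified Lean document; each statement's English description precedes it below -/
import Mathlib

section
/- Let X be a finite alphabet. The set B of all bounded finite-state automorphisms of the rooted tree X^* is a group: it contains the identity automorphism and is closed under composition and under taking inverses. -/
/-- The restriction `q|_v` of a tree automorphism (permutation of `X^*`),
determined by `q(vw) = q(v) · q|_v(w)`: as a function it is
`w ↦ drop |v| (q (v ++ w))`. -/
def treeRestrict {X : Type*} (q : Equiv.Perm (List X)) (v : List X) :
    List X → List X :=
  fun w => (q (v ++ w)).drop v.length

/-- A permutation of `X^*` is an automorphism of the rooted tree `X^*` if it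
preserves word length and the prefix relation. -/
def IsTreeAut {X : Type*} (q : Equiv.Perm (List X)) : Prop :=
  (∀ w : List X, (q w).length = w.length) ∧
    ∀ u v : List X, u <+: v → q u <+: q v

/-- A tree automorphism is finite-state if it has finitely many restrictions. -/
def IsFiniteState {X : Type*} (q : Equiv.Perm (List X)) : Prop :=
  (Set.range (treeRestrict q)).Finite

/-- A tree automorphism is bounded if the number `θ(k,q)` of words `v ∈ X^k`
such that `q|_v` acts nontrivially on the first level `X` is bounded over `k`. -/
def IsBoundedAut {X : Type*} (q : Equiv.Perm (List X)) : Prop :=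
  ∃ C : ℕ, ∀ k : ℕ,
    {v : List X | v.length = k ∧ ∃ x : X, treeRestrict q v [x] ≠ [x]}.ncard ≤ C

section Lemmas
variable {X : Type*} {p q : Equiv.Perm (List X)}

lemma restrict_spec (hq : IsTreeAut q) (v w : List X) :
    q (v ++ w) = q v ++ treeRestrict q v w := by
  obtain ⟨t, ht⟩ := hq.2 v (v ++ w) (List.prefix_append v w)
  have hlen : (q v).length = v.length := hq.1 v
  rw [← ht]
  congr 1
  rw [treeRestrict, ← ht, ← hlen, List.drop_left]

lemma restrict_length (hq : IsTreeAut q) (v w : List X) :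
    (treeRestrict q v w).length = w.length := by
  have := hq.1 (v ++ w)
  simp only [treeRestrict, List.length_drop, this, List.length_append]
  omega

lemma inv_treeAut (hq : IsTreeAut q) : IsTreeAut q⁻¹ := by
  have hlen : ∀ w : List X, (q⁻¹ w).length = w.length := by
    intro w
    have := hq.1 (q⁻¹ w)
    rw [(Equiv.Perm.eq_inv_iff_eq (f := q)).mp rfl] at this
    exact this.symm
  refine ⟨hlen, fun u v huv => ?_⟩
  set a := (q⁻¹ v).take u.length with ha
  have hpre : a <+: q⁻¹ v := List.take_prefix _ _
  have h1 : q a <+: v := by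
    have := hq.2 a (q⁻¹ v) hpre
    rwa [(Equiv.Perm.eq_inv_iff_eq (f := q)).mp rfl] at this
  have hlu : u.length ≤ v.length := huv.length_le
  have hla : (q a).length = u.length := by
    rw [hq.1 a, ha, List.length_take, hlen v]
    omega
  have : q a = u := by
    rw [List.prefix_iff_eq_take.mp h1, List.prefix_iff_eq_take.mp huv, hla]
  have : a = q⁻¹ u := by rw [← this, (Equiv.Perm.inv_eq_iff_eq (f := q)).mpr rfl]
  rwa [this] at hpre

lemma restrict_mul (hp : IsTreeAut p) (hq : IsTreeAut q) (v : List X) :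
    treeRestrict (p * q) v = treeRestrict p (q v) ∘ treeRestrict q v := by
  funext w
  have h1 : (p * q) (v ++ w) = p (q v) ++ treeRestrict p (q v) (treeRestrict q v w) := by
    rw [Equiv.Perm.mul_apply, restrict_spec hq, restrict_spec hp]
  have h2 : (p (q v)).length = v.length := by rw [hp.1, hq.1]
  show ((p * q) (v ++ w)).drop v.length = _
  rw [h1, ← h2, List.drop_left]
  rfl

lemma mul_treeAut (hp : IsTreeAut p) (hq : IsTreeAut q) : IsTreeAut (p * q) := by
  refine ⟨fun w => by rw [Equiv.Perm.mul_apply, hp.1, hq.1], fun u v huv => ?_⟩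
  simp only [Equiv.Perm.mul_apply]
  exact hp.2 _ _ (hq.2 _ _ huv)

lemma restrict_inv_left (hq : IsTreeAut q) (v w : List X) :
    treeRestrict q (q⁻¹ v) (treeRestrict q⁻¹ v w) = w := by
  have hq' := inv_treeAut hq
  have h1 : q⁻¹ v ++ treeRestrict q⁻¹ v w = q⁻¹ (v ++ w) := (restrict_spec hq' v w).symm
  have h2 : (q⁻¹ v).length = v.length := hq'.1 v
  show (q ((q⁻¹ v) ++ _)).drop (q⁻¹ v).length = w
  rw [h1, (Equiv.Perm.eq_inv_iff_eq (f := q)).mp rfl, h2, List.drop_left]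

lemma restrict_inv_right (hq : IsTreeAut q) (v z : List X) :
    treeRestrict q⁻¹ v (treeRestrict q (q⁻¹ v) z) = z := by
  have h1 : v ++ treeRestrict q (q⁻¹ v) z = q (q⁻¹ v ++ z) := by
    rw [restrict_spec hq, (Equiv.Perm.eq_inv_iff_eq (f := q)).mp rfl]
  have h2 : (q⁻¹ v).length = v.length := (inv_treeAut hq).1 v
  show (q⁻¹ (v ++ _)).drop v.length = z
  rw [h1, (Equiv.Perm.inv_eq_iff_eq (f := q)).mpr rfl, ← h2, List.drop_left]

lemma restrict_inv_eq_invFun (hq : IsTreeAut q) (v : List X) :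
    treeRestrict q⁻¹ v = Function.invFun (treeRestrict q (q⁻¹ v)) := by
  have hinj : Function.Injective (treeRestrict q (q⁻¹ v)) :=
    Function.LeftInverse.injective (restrict_inv_right hq v)
  funext b
  apply hinj
  rw [restrict_inv_left hq v b,
    Function.invFun_eq ⟨treeRestrict q⁻¹ v b, restrict_inv_left hq v b⟩]
end Lemmas


/-- The set `B` of all bounded finite-state automorphisms of
the rooted tree `X^*` over a finite alphabet is a group: it contains the
identity and is closed under composition and under taking inverses. -/
theorem bounded_automorphisms_form_group (X : Type*) [Fintype X] :
    (1 : Equiv.Perm (List X)) ∈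
        {r : Equiv.Perm (List X) | IsTreeAut r ∧ IsFiniteState r ∧ IsBoundedAut r} ∧
    (∀ p q : Equiv.Perm (List X),
      p ∈ {r : Equiv.Perm (List X) | IsTreeAut r ∧ IsFiniteState r ∧ IsBoundedAut r} →
      q ∈ {r : Equiv.Perm (List X) | IsTreeAut r ∧ IsFiniteState r ∧ IsBoundedAut r} →
      p * q ∈ {r : Equiv.Perm (List X) | IsTreeAut r ∧ IsFiniteState r ∧ IsBoundedAut r}) ∧
    (∀ q : Equiv.Perm (List X),
      q ∈ {r : Equiv.Perm (List X) | IsTreeAut r ∧ IsFiniteState r ∧ IsBoundedAut r} →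
      q⁻¹ ∈ {r : Equiv.Perm (List X) | IsTreeAut r ∧ IsFiniteState r ∧ IsBoundedAut r}) := by
  have hfin : ∀ k : ℕ, {v : List X | v.length = k}.Finite := fun k =>
    List.finite_length_eq X k
  refine ⟨?_, ?_, ?_⟩
  · -- identity
    have hres1 : ∀ v : List X, treeRestrict (1 : Equiv.Perm (List X)) v = id := by
      intro v; funext w
      simp [treeRestrict]
    refine ⟨⟨fun w => rfl, fun u v h => h⟩, ?_, 0, fun k => ?_⟩
    · refine (Set.finite_singleton (id : List X → List X)).subset ?_
      rintro f ⟨v, rfl⟩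
      simp [hres1 v]
    · have : {v : List X | v.length = k ∧
          ∃ x : X, treeRestrict (1 : Equiv.Perm (List X)) v [x] ≠ [x]} = ∅ := by
        ext v; simp [hres1]
      simp [this]
  · -- multiplication
    rintro p q ⟨hpA, hpF, Cp, hCp⟩ ⟨hqA, hqF, Cq, hCq⟩
    refine ⟨mul_treeAut hpA hqA, ?_, Cp + Cq, fun k => ?_⟩
    · refine (Set.Finite.image2 (· ∘ ·) hpF hqF).subset ?_
      rintro f ⟨v, rfl⟩
      exact ⟨_, Set.mem_range_self _, _, Set.mem_range_self _,
        (restrict_mul hpA hqA v).symm⟩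
    · set Sp := {v : List X | v.length = k ∧ ∃ x : X, treeRestrict p v [x] ≠ [x]} with hSp
      set Sq := {v : List X | v.length = k ∧ ∃ x : X, treeRestrict q v [x] ≠ [x]} with hSq
      have hSpf : Sp.Finite := (hfin k).subset fun v hv => hv.1
      have hSqf : Sq.Finite := (hfin k).subset fun v hv => hv.1
      have hsub : {v : List X | v.length = k ∧ ∃ x : X, treeRestrict (p * q) v [x] ≠ [x]}
          ⊆ (⇑q⁻¹ '' Sp) ∪ Sq := by
        rintro v ⟨hk, x, hx⟩
        rw [restrict_mul hpA hqA] at hx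
        simp only [Function.comp_apply] at hx
        by_cases h : treeRestrict q v [x] = [x]
        · left
          rw [h] at hx
          exact ⟨q v, ⟨by rw [hqA.1, hk], x, hx⟩, q.symm_apply_apply v⟩
        · right; exact ⟨hk, x, h⟩
      calc {v : List X | v.length = k ∧ ∃ x : X, treeRestrict (p * q) v [x] ≠ [x]}.ncard
          ≤ ((⇑q⁻¹ '' Sp) ∪ Sq).ncard :=
            Set.ncard_le_ncard hsub ((hSpf.image _).union hSqf)
        _ ≤ (⇑q⁻¹ '' Sp).ncard + Sq.ncard := Set.ncard_union_le _ _
        _ ≤ Cp + Cq := by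
            rw [Set.ncard_image_of_injective _ (Equiv.injective _)]
            exact Nat.add_le_add (hCp k) (hCq k)
  · -- inverse
    rintro q ⟨hqA, hqF, C, hC⟩
    refine ⟨inv_treeAut hqA, ?_, C, fun k => ?_⟩
    · refine (hqF.image Function.invFun).subset ?_
      rintro f ⟨v, rfl⟩
      exact ⟨treeRestrict q (q⁻¹ v), Set.mem_range_self _,
        (restrict_inv_eq_invFun hqA v).symm⟩
    · set S := {u : List X | u.length = k ∧ ∃ x : X, treeRestrict q u [x] ≠ [x]} with hS
      have hSf : S.Finite := (hfin k).subset fun v hv => hv.1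
      have hsub : {v : List X | v.length = k ∧ ∃ x : X, treeRestrict q⁻¹ v [x] ≠ [x]}
          ⊆ ⇑q '' S := by
        rintro v ⟨hk, x, hx⟩
        refine ⟨q⁻¹ v, ⟨by rw [(inv_treeAut hqA).1, hk], ?_⟩,
          q.apply_symm_apply v⟩
        have hlen1 : (treeRestrict q⁻¹ v [x]).length = 1 :=
          restrict_length (inv_treeAut hqA) v [x]
        obtain ⟨y, hy⟩ := List.length_eq_one_iff.mp hlen1
        refine ⟨y, fun hcon => hx ?_⟩
        have h2 : treeRestrict q (q⁻¹ v) [y] = [x] := by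
          rw [← hy]; exact restrict_inv_left hqA v [x]
        rw [hy]
        exact (h2.symm.trans hcon).symm
      calc {v : List X | v.length = k ∧ ∃ x : X, treeRestrict q⁻¹ v [x] ≠ [x]}.ncard
          ≤ (⇑q '' S).ncard := Set.ncard_le_ncard hsub (hSf.image _)
        _ = S.ncard := Set.ncard_image_of_injective _ (Equiv.injective _)
        _ ≤ C := hC k
end

section
/- Every finitely generated self-similar group G of automorphisms of X^* all of whose elements are bounded finite-state automorphisms is contracting, i.e., its nucleus is finite. -/
/-- The word `x_k … x_1` formed by the last `k` letters of the left-infinite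
sequence `… ξ 2, ξ 1, ξ 0` (so `ξ 0` is the rightmost letter). -/
def wordOf {X : Type*} (ξ : ℕ → X) (k : ℕ) : List X := (List.range k).reverse.map ξ

/-- A faithful self-similar action of a group `G` on the set `X^*` of finite
words over `X`.  Words are lists whose head is the leftmost letter, so the
self-similarity condition `g(xw) = g(x)·(g|_x)(w)` reads on `x :: w`.
The (unique, by faithfulness) restriction `g|_x` and output letter `g(x)`
are recorded as data `res` and `lett`. -/
structure SelfSimilarAction (G : Type*) [Group G] (X : Type*) where
  act : G → List X → List X
  act_one : ∀ w, act 1 w = w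
  act_mul : ∀ g h w, act (g * h) w = act g (act h w)
  faithful : ∀ g, (∀ w, act g w = w) → g = 1
  res : G → X → G
  lett : G → X → X
  self_sim : ∀ g x w, act g (x :: w) = lett g x :: act (res g x) w

namespace SelfSimilarAction

variable {G : Type*} [Group G] {X : Type*}

/-- The restriction `g|_v` for a finite word `v`, via `g|_{xv} = (g|_x)|_v`. -/
def resW (S : SelfSimilarAction G X) (g : G) (v : List X) : G := v.foldl S.res g

/-- The nucleus `N = ⋃_{g ∈ G} ⋂_{n ≥ 0} { g|_v : v ∈ X^*, |v| ≥ n }`. -/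
def nucleus (S : SelfSimilarAction G X) : Set G :=
  {h | ∃ g : G, ∀ n : ℕ, ∃ v : List X, n ≤ v.length ∧ S.resW g v = h}

/-- The action is contracting if its nucleus is finite. -/
def IsContracting (S : SelfSimilarAction G X) : Prop := S.nucleus.Finite

/-- Asymptotic equivalence of left-infinite sequences: there are group elements
`g_k`, taking finitely many values, with `g_k(x_k…x_1) = y_k…y_1` for all `k`. -/
def AsympEq (S : SelfSimilarAction G X) (ξ ζ : ℕ → X) : Prop :=
  ∃ F : Finset G, ∃ gg : ℕ → G, (∀ k, gg k ∈ F) ∧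
    ∀ k : ℕ, S.act (gg k) (wordOf ξ k) = wordOf ζ k

/-- The tile `T_v`: the image in the limit space `Quot S.AsympEq` of the
cylinder of all left-infinite sequences ending in `v`. -/
def Tile (S : SelfSimilarAction G X) (v : List X) : Set (Quot S.AsympEq) :=
  Quot.mk S.AsympEq '' {ξ : ℕ → X | wordOf ξ v.length = v}

/-- The limit space is post-critically finite: any two distinct tiles of the
same level have finite intersection. -/
def IsPCF (S : SelfSimilarAction G X) : Prop :=
  ∀ u v : List X, u.length = v.length → u ≠ v → (S.Tile u ∩ S.Tile v).Finite

/-- `g` is a finite-state element: it has finitely many restrictions. -/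
def FiniteState (S : SelfSimilarAction G X) (g : G) : Prop :=
  (Set.range (S.resW g)).Finite

/-- `g` is a bounded (finite-state) element: the number `θ(k,g)` of words
`v ∈ X^k` such that `g|_v` acts nontrivially on the first level `X` is
bounded over `k`. -/
def Bounded (S : SelfSimilarAction G X) (g : G) : Prop :=
  FiniteState S g ∧ ∃ C : ℕ, ∀ k : ℕ,
    {v : List X | v.length = k ∧ ∃ x : X, S.lett (S.resW g v) x ≠ x}.ncard ≤ C

/-- The set of left-infinite paths in the Moore diagram of the nucleus ending
at a non-trivial state: `p.1` is the sequence of states `(g_k)_{k ≥ 0}`,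
`p.2 k` is the letter `x_{k+1}`, the path condition is `g_{k+1}|_{x_{k+1}} = g_k`,
and the path ends at the non-trivial state `g_0 ≠ 1`. -/
def nucleusPathsToNontrivial (S : SelfSimilarAction G X) : Set ((ℕ → G) × (ℕ → X)) :=
  {p | (∀ k, p.1 k ∈ S.nucleus) ∧ (∀ k, S.res (p.1 (k + 1)) (p.2 k) = p.1 k) ∧ p.1 0 ≠ 1}

end SelfSimilarAction

namespace SelfSimilarAction

variable {G : Type*} [Group G] {X : Type*}

theorem resW_nil (S : SelfSimilarAction G X) (g : G) : S.resW g [] = g := rfl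

theorem resW_cons (S : SelfSimilarAction G X) (g : G) (x : X) (v : List X) :
    S.resW g (x :: v) = S.resW (S.res g x) v := rfl

theorem resW_append (S : SelfSimilarAction G X) (g : G) (u v : List X) :
    S.resW g (u ++ v) = S.resW (S.resW g u) v := List.foldl_append

theorem resW_singleton (S : SelfSimilarAction G X) (g : G) (x : X) :
    S.resW g [x] = S.res g x := rfl

theorem act_nil (S : SelfSimilarAction G X) (g : G) : S.act g [] = [] := by
  cases h : S.act g [] with
  | nil => rfl
  | cons y t =>
    have h1 : S.act (g⁻¹ * g) [] = [] := by rw [inv_mul_cancel, S.act_one]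
    rw [S.act_mul, h, S.self_sim] at h1
    cases h1

theorem act_leftinv (S : SelfSimilarAction G X) (g : G) (v : List X) :
    S.act g⁻¹ (S.act g v) = v := by
  rw [← S.act_mul, inv_mul_cancel, S.act_one]

theorem eq_of_act_eq (S : SelfSimilarAction G X) {a b : G}
    (h : ∀ v, S.act a v = S.act b v) : a = b := by
  have h2 : ∀ v, S.act (b⁻¹ * a) v = v := by
    intro v
    rw [S.act_mul, h, ← S.act_mul, inv_mul_cancel, S.act_one]
  have := S.faithful _ h2
  rwa [inv_mul_eq_one, eq_comm] at this

theorem act_injective (S : SelfSimilarAction G X) (g : G) :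
    Function.Injective (S.act g) := fun u v h => by
  have := congrArg (S.act g⁻¹) h
  rwa [S.act_leftinv, S.act_leftinv] at this

theorem act_length (S : SelfSimilarAction G X) (g : G) (v : List X) :
    (S.act g v).length = v.length := by
  induction v generalizing g with
  | nil => rw [S.act_nil]
  | cons x v ih => rw [S.self_sim]; simp [ih]

theorem act_append (S : SelfSimilarAction G X) (g : G) (u v : List X) :
    S.act g (u ++ v) = S.act g u ++ S.act (S.resW g u) v := by
  induction u generalizing g with
  | nil => rw [S.resW_nil]; simp [S.act_nil]
  | cons x u ih =>
    rw [List.cons_append, S.self_sim, ih, S.self_sim, S.resW_cons, List.cons_append]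

theorem lett_one (S : SelfSimilarAction G X) (x : X) : S.lett 1 x = x := by
  have h := S.self_sim 1 x []
  rw [S.act_one] at h
  injection h with h1 h2
  exact h1.symm

theorem res_one (S : SelfSimilarAction G X) (x : X) : S.res 1 x = 1 := by
  apply S.faithful
  intro w
  have h := S.self_sim 1 x w
  rw [S.act_one] at h
  injection h with h1 h2
  exact h2.symm

theorem lett_mul (S : SelfSimilarAction G X) (g h : G) (x : X) :
    S.lett (g * h) x = S.lett g (S.lett h x) := by
  have e := S.self_sim (g * h) x []
  rw [S.act_mul, S.self_sim, S.self_sim] at e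
  injection e with h1 h2
  exact h1.symm

theorem res_mul (S : SelfSimilarAction G X) (g h : G) (x : X) :
    S.res (g * h) x = S.res g (S.lett h x) * S.res h x := by
  apply S.eq_of_act_eq
  intro w
  have e := S.self_sim (g * h) x w
  rw [S.act_mul, S.self_sim, S.self_sim] at e
  injection e with h1 h2
  rw [S.act_mul]
  exact h2.symm

theorem resW_one (S : SelfSimilarAction G X) (v : List X) : S.resW 1 v = 1 := by
  induction v with
  | nil => rfl
  | cons x v ih => rw [S.resW_cons, S.res_one, ih]

theorem resW_mul (S : SelfSimilarAction G X) (g h : G) (v : List X) :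
    S.resW (g * h) v = S.resW g (S.act h v) * S.resW h v := by
  induction v generalizing g h with
  | nil => rw [S.act_nil, S.resW_nil, S.resW_nil, S.resW_nil]
  | cons x v ih =>
    rw [S.resW_cons, S.res_mul, ih, S.self_sim, S.resW_cons, S.resW_cons]

theorem act_singleton (S : SelfSimilarAction G X) (g : G) (x : X) :
    S.act g [x] = [S.lett g x] := by
  rw [S.self_sim, S.act_nil]

theorem lett_injective (S : SelfSimilarAction G X) (g : G) :
    Function.Injective (S.lett g) := fun x y h => by
  have : S.act g [x] = S.act g [y] := by rw [S.act_singleton, S.act_singleton, h]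
  have h3 := S.act_injective g this
  injection h3

theorem eq_one_of_lett_trivial (S : SelfSimilarAction G X) {g : G}
    (h : ∀ w x, S.lett (S.resW g w) x = x) : g = 1 := by
  apply S.faithful
  suffices H : ∀ (v : List X) (g' : G), (∀ w x, S.lett (S.resW g' w) x = x) → S.act g' v = v by
    exact fun v => H v g h
  intro v
  induction v with
  | nil => intro g' _; exact S.act_nil g'
  | cons x v ih =>
    intro g' hg'
    rw [S.self_sim]
    have h1 : S.lett g' x = x := by have := hg' [] x; rwa [S.resW_nil] at this
    have h2 := ih (S.res g' x) (fun w y => by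
      have := hg' (x :: w) y; rwa [S.resW_cons] at this)
    rw [h1, h2]

theorem exists_active_of_ne_one (S : SelfSimilarAction G X) {g : G} (h : g ≠ 1) :
    ∃ w x, S.lett (S.resW g w) x ≠ x := by
  by_contra hc
  push_neg at hc
  exact h (S.eq_one_of_lett_trivial hc)

theorem resW_eq_one_append (S : SelfSimilarAction G X) {g : G} {v : List X}
    (h : S.resW g v = 1) (z : List X) : S.resW g (v ++ z) = 1 := by
  rw [S.resW_append, h, S.resW_one]

/-! ### Prefix words of rays -/

def pre {X : Type*} (ζ : ℕ → X) (k : ℕ) : List X := (List.range k).map ζ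

theorem pre_zero {X : Type*} (ζ : ℕ → X) : pre ζ 0 = [] := rfl

theorem pre_succ {X : Type*} (ζ : ℕ → X) (k : ℕ) : pre ζ (k + 1) = pre ζ k ++ [ζ k] := by
  simp [pre, List.range_succ]

theorem pre_length {X : Type*} (ζ : ℕ → X) (k : ℕ) : (pre ζ k).length = k := by
  simp [pre]

theorem pre_add {X : Type*} (ζ : ℕ → X) (a b : ℕ) :
    pre ζ (a + b) = pre ζ a ++ pre (fun i => ζ (a + i)) b := by
  induction b with
  | zero => simp [pre_zero]
  | succ b ih =>
    rw [← Nat.add_assoc, pre_succ, ih, pre_succ, List.append_assoc]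

def st (S : SelfSimilarAction G X) (g : G) (ζ : ℕ → X) (k : ℕ) : G := S.resW g (pre ζ k)

theorem st_zero (S : SelfSimilarAction G X) (g : G) (ζ : ℕ → X) : S.st g ζ 0 = g := rfl

theorem st_succ (S : SelfSimilarAction G X) (g : G) (ζ : ℕ → X) (k : ℕ) :
    S.st g ζ (k + 1) = S.res (S.st g ζ k) (ζ k) := by
  rw [st, pre_succ, S.resW_append, S.resW_singleton]; rfl

theorem st_add (S : SelfSimilarAction G X) (g : G) (ζ : ℕ → X) (a b : ℕ) :
    S.st g ζ (a + b) = S.st (S.st g ζ a) (fun i => ζ (a + i)) b := by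
  rw [st, pre_add, S.resW_append]; rfl

def outRay (S : SelfSimilarAction G X) (g : G) (ζ : ℕ → X) : ℕ → X :=
  fun k => S.lett (S.st g ζ k) (ζ k)

theorem act_pre (S : SelfSimilarAction G X) (g : G) (ζ : ℕ → X) (k : ℕ) :
    S.act g (pre ζ k) = pre (S.outRay g ζ) k := by
  induction k with
  | zero => rw [pre_zero, pre_zero, S.act_nil]
  | succ k ih =>
    rw [pre_succ, pre_succ, S.act_append, ih, S.act_singleton]
    rfl

theorem st_mul (S : SelfSimilarAction G X) (g h : G) (ζ : ℕ → X) (k : ℕ) :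
    S.st (g * h) ζ k = S.st g (S.outRay h ζ) k * S.st h ζ k := by
  rw [st, S.resW_mul, st, st, act_pre]

theorem outRay_mul (S : SelfSimilarAction G X) (g h : G) (ζ : ℕ → X) (k : ℕ) :
    S.outRay (g * h) ζ k = S.outRay g (S.outRay h ζ) k := by
  rw [outRay, outRay, S.st_mul, S.lett_mul]
  rfl

theorem st_one (S : SelfSimilarAction G X) (ζ : ℕ → X) (k : ℕ) : S.st 1 ζ k = 1 :=
  S.resW_one _

theorem outRay_one (S : SelfSimilarAction G X) (ζ : ℕ → X) (k : ℕ) :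
    S.outRay 1 ζ k = ζ k := by
  rw [outRay, S.st_one, S.lett_one]

/-! ### Finitary elements -/

def IsFinitary (S : SelfSimilarAction G X) (g : G) : Prop :=
  ∃ d, ∀ v : List X, v.length = d → S.resW g v = 1

theorem fin_mono (S : SelfSimilarAction G X) {g : G} {d : ℕ}
    (h : ∀ v : List X, v.length = d → S.resW g v = 1) :
    ∀ v : List X, d ≤ v.length → S.resW g v = 1 := by
  intro v hv
  have hsplit := List.take_append_drop d v
  have hlen : (v.take d).length = d := by
    rw [List.length_take]; omega
  rw [← hsplit, S.resW_append, h _ hlen, S.resW_one]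

theorem isFinitary_of_eq_one (S : SelfSimilarAction G X) {g : G} (h : g = 1) :
    S.IsFinitary g := ⟨0, fun v hv => by
  rw [List.length_eq_zero_iff.mp hv, S.resW_nil, h]⟩

theorem isFinitary_res (S : SelfSimilarAction G X) {g : G} (h : S.IsFinitary g) (x : X) :
    S.IsFinitary (S.res g x) := by
  obtain ⟨d, hd⟩ := h
  exact ⟨d, fun v hv => by
    rw [← S.resW_singleton, ← S.resW_append]
    exact S.fin_mono hd _ (by simp [hv])⟩

theorem exists_nonfin_child (S : SelfSimilarAction G X) [Fintype X] {g : G}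
    (h : ¬ S.IsFinitary g) : ∃ x, ¬ S.IsFinitary (S.res g x) := by
  by_contra hc
  push_neg at hc
  apply h
  choose d hd using hc
  classical
  refine ⟨(Finset.univ.sup d) + 1, fun v hv => ?_⟩
  cases v with
  | nil => simp at hv
  | cons x v =>
    rw [S.resW_cons]
    apply S.fin_mono (hd x)
    have : d x ≤ Finset.univ.sup d := Finset.le_sup (Finset.mem_univ x)
    simp at hv; omega

/-! ### One-ray elements -/

def IsOneRay (S : SelfSimilarAction G X) (g : G) : Prop :=
  ¬ S.IsFinitary g ∧ ∀ u v : List X, ¬ S.IsFinitary (S.resW g u) →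
    ¬ S.IsFinitary (S.resW g v) → u <+: v ∨ v <+: u

open Classical in
noncomputable def dirx (S : SelfSimilarAction G X) [Nonempty X] (g : G) : X :=
  if h : ∃ x, ¬ S.IsFinitary (S.res g x) then h.choose else Classical.arbitrary X

theorem dirx_spec (S : SelfSimilarAction G X) [Fintype X] [Nonempty X] {g : G}
    (h : ¬ S.IsFinitary g) : ¬ S.IsFinitary (S.res g (S.dirx g)) := by
  have he := S.exists_nonfin_child h
  rw [dirx]
  rw [dif_pos he]
  exact he.choose_spec

theorem singleton_prefix_eq {α : Type*} {a b : α} (h : [a] <+: [b]) : a = b := by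
  have := (List.cons_prefix_cons.mp h).1
  exact this

theorem dirx_unique (S : SelfSimilarAction G X) [Fintype X] [Nonempty X] {g : G}
    (h : S.IsOneRay g) {x : X} (hx : ¬ S.IsFinitary (S.res g x)) : x = S.dirx g := by
  have h1 : ¬ S.IsFinitary (S.resW g [x]) := by rwa [S.resW_singleton]
  have h2 : ¬ S.IsFinitary (S.resW g [S.dirx g]) := by
    rw [S.resW_singleton]; exact S.dirx_spec h.1
  rcases h.2 _ _ h1 h2 with hp | hp
  · exact singleton_prefix_eq hp
  · exact (singleton_prefix_eq hp).symm

theorem oneray_off_fin (S : SelfSimilarAction G X) [Fintype X] [Nonempty X] {g : G}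
    (h : S.IsOneRay g) {x : X} (hx : x ≠ S.dirx g) : S.IsFinitary (S.res g x) := by
  by_contra hc
  exact hx (S.dirx_unique h hc)

theorem oneray_fit (S : SelfSimilarAction G X) [Fintype X] [Nonempty X] {g : G}
    (h : S.IsOneRay g) : S.IsOneRay (S.res g (S.dirx g)) := by
  refine ⟨S.dirx_spec h.1, fun u v hu hv => ?_⟩
  rw [← S.resW_singleton, ← S.resW_append] at hu hv
  rcases h.2 _ _ hu hv with hp | hp
  · left; simpa using hp
  · right; simpa using hp

def Tame (S : SelfSimilarAction G X) (g : G) : Prop := S.IsFinitary g ∨ S.IsOneRay g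

noncomputable def Fit (S : SelfSimilarAction G X) [Nonempty X] : G → G :=
  fun u => S.res u (S.dirx u)

/-! ### Eventually periodic sequences -/

def EvP {α : Type*} (f : ℕ → α) (P : ℕ) : Prop := ∃ K, ∀ k, K ≤ k → f (k + P) = f k

theorem evp_iterate {α : Type*} {f : ℕ → α} {P : ℕ} (h : EvP f P) :
    ∃ K, ∀ m k, K ≤ k → f (k + m * P) = f k := by
  obtain ⟨K, hK⟩ := h
  refine ⟨K, fun m => ?_⟩
  induction m with
  | zero => simp
  | succ m ih =>
    intro k hk
    have : k + (m + 1) * P = (k + P) + m * P := by ring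
    rw [this, ih _ (by omega), hK _ hk]

theorem evp_dvd {α : Type*} {f : ℕ → α} {P J : ℕ} (h : EvP f P) (hd : P ∣ J) : EvP f J := by
  obtain ⟨m, rfl⟩ := hd
  obtain ⟨K, hK⟩ := evp_iterate h
  exact ⟨K, fun k hk => by rw [mul_comm]; exact hK m k hk⟩

theorem evp_of_evEq {α : Type*} {f g : ℕ → α} {P K₀ : ℕ}
    (he : ∀ k, K₀ ≤ k → f k = g k) (h : EvP g P) : EvP f P := by
  obtain ⟨K, hK⟩ := h
  exact ⟨max K K₀, fun k hk => by
    rw [he _ (by omega), he _ (by omega), hK _ (by omega)]⟩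

theorem evp_map2 {α β γ : Type*} {f : ℕ → α} {g : ℕ → β} {P : ℕ} (ψ : α → β → γ)
    (hf : EvP f P) (hg : EvP g P) : EvP (fun k => ψ (f k) (g k)) P := by
  obtain ⟨K1, h1⟩ := hf; obtain ⟨K2, h2⟩ := hg
  exact ⟨max K1 K2, fun k hk => by simp only []; rw [h1 _ (by omega), h2 _ (by omega)]⟩

theorem evp_map {α γ : Type*} {f : ℕ → α} {P : ℕ} (ψ : α → γ)
    (hf : EvP f P) : EvP (fun k => ψ (f k)) P := by
  obtain ⟨K1, h1⟩ := hf
  exact ⟨K1, fun k hk => by simp only []; rw [h1 _ hk]⟩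

theorem evp_const {α : Type*} (a : α) (P : ℕ) : EvP (fun _ => a) P := ⟨0, fun _ _ => rfl⟩

theorem global_iter {α : Type*} {f : ℕ → α} {p : ℕ} (h : ∀ k, f (k + p) = f k) :
    ∀ m k, f (k + m * p) = f k := by
  intro m
  induction m with
  | zero => simp
  | succ m ih =>
    intro k
    have : k + (m + 1) * p = (k + m * p) + p := by ring
    rw [this, h, ih]

theorem evp_global {α : Type*} {f : ℕ → α} {p J : ℕ} (hper : ∀ k, f (k + p) = f k)
    (hp : 1 ≤ p) (h : EvP f J) : ∀ k, f (k + J) = f k := by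
  obtain ⟨K, hK⟩ := h
  intro k
  have h1 : f (k + J) = f (k + J + K * p) := (global_iter hper K (k + J)).symm
  have h2 : k + J + K * p = (k + K * p) + J := by ring
  have h3 : K ≤ k + K * p := by nlinarith
  rw [h1, h2, hK _ h3, global_iter hper]

theorem global_mod {α : Type*} {f : ℕ → α} {J : ℕ} (hper : ∀ k, f (k + J) = f k)
    (hJ : 1 ≤ J) (k : ℕ) : f k = f (k % J) := by
  conv_lhs => rw [← Nat.mod_add_div k J]
  rw [mul_comm]
  exact global_iter hper _ _

theorem evp_orbit {α : Type*} {Qs : Set α} (hfin : Qs.Finite) (FF : α → α)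
    (hclosed : ∀ u ∈ Qs, FF u ∈ Qs) {q : α} (hq : q ∈ Qs) :
    ∃ ℓ, 1 ≤ ℓ ∧ ℓ ≤ Qs.ncard ∧ EvP (fun k => FF^[k] q) ℓ := by
  classical
  have horb : ∀ k, FF^[k] q ∈ Qs := by
    intro k
    induction k with
    | zero => exact hq
    | succ k ih => rw [Function.iterate_succ_apply']; exact hclosed _ ih
  have hcard : hfin.toFinset.card < (Finset.range (Qs.ncard + 1)).card := by
    rw [Finset.card_range, Set.ncard_eq_toFinset_card _ hfin]
    omega
  obtain ⟨a, ha, b, hb, hne, heq⟩ := Finset.exists_ne_map_eq_of_card_lt_of_maps_to hcard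
    (f := fun k => FF^[k] q) (fun k _ => hfin.mem_toFinset.mpr (horb k))
  simp only [Finset.mem_range] at ha hb
  wlog hab : a < b generalizing a b
  · exact this b a hne.symm heq.symm hb ha (by omega)
  refine ⟨b - a, by omega, by omega, a, fun k hk => ?_⟩
  obtain ⟨j, rfl⟩ := Nat.exists_eq_add_of_le hk
  have h1 : a + j + (b - a) = j + b := by omega
  have h2 : a + j = j + a := by omega
  simp only []
  rw [h1, h2, Function.iterate_add_apply, Function.iterate_add_apply, heq]

/-! ### The single-factor dichotomy -/

theorem st_die (S : SelfSimilarAction G X) {q : G} {ζ : ℕ → X} {K : ℕ}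
    (h : S.st q ζ K = 1) : ∀ k, K ≤ k → S.st q ζ k = 1 := by
  intro k hk
  obtain ⟨j, rfl⟩ := Nat.exists_eq_add_of_le hk
  rw [S.st_add, h, S.st_one]

theorem single_dichotomy (S : SelfSimilarAction G X) [Fintype X] [Nonempty X]
    {q : G} (hq : S.Tame q) (ζ : ℕ → X) :
    (∃ K, ∀ k, K ≤ k → S.st q ζ k = 1) ∨
    (∀ k, S.st q ζ k = (S.Fit)^[k] q ∧ S.IsOneRay ((S.Fit)^[k] q) ∧
      ζ k = S.dirx ((S.Fit)^[k] q)) := by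
  by_cases hk : ∃ K, S.st q ζ K = 1
  · obtain ⟨K, hK⟩ := hk
    exact Or.inl ⟨K, S.st_die hK⟩
  · push_neg at hk
    right
    have hnf : ∀ k, ¬ S.IsFinitary (S.st q ζ k) := by
      intro k hfin
      obtain ⟨d, hd⟩ := hfin
      apply hk (k + d)
      rw [S.st_add]
      exact hd _ (pre_length _ _)
    have hqor : S.IsOneRay q := by
      rcases hq with hfin | hor
      · exact absurd (by rw [← S.st_zero q ζ]; exact hnf 0) (not_not.mpr hfin)
      · exact hor
    intro k
    induction k with
    | zero =>
      refine ⟨S.st_zero q ζ, hqor, ?_⟩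
      have h1 : ¬ S.IsFinitary (S.res q (ζ 0)) := by
        have := hnf 1
        rwa [S.st_succ, S.st_zero] at this
      exact S.dirx_unique hqor h1
    | succ k ih =>
      obtain ⟨h1, h2, h3⟩ := ih
      have hstep : S.st q ζ (k + 1) = (S.Fit)^[k + 1] q := by
        rw [S.st_succ, h1, h3, Function.iterate_succ_apply']
        rfl
      have hor : S.IsOneRay ((S.Fit)^[k + 1] q) := by
        rw [Function.iterate_succ_apply']
        exact S.oneray_fit h2
      refine ⟨hstep, hor, ?_⟩
      have h4 : ¬ S.IsFinitary (S.res ((S.Fit)^[k + 1] q) (ζ (k + 1))) := by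
        have := hnf (k + 2)
        rwa [S.st_succ, hstep] at this
      exact S.dirx_unique hor h4

/-! ### The main induction over factor lists -/

section MainInd

variable (S : SelfSimilarAction G X) [Fintype X] [Nonempty X]
variable {Qset : Set G} {Fstar : Set G} {J₀ : ℕ}

theorem alive_package (hQfin : Qset.Finite)
    (hQres : ∀ q ∈ Qset, ∀ x : X, S.res q x ∈ Qset)
    (hFfin : ∀ q ∈ Qset, S.IsFinitary q → q ∈ Fstar)
    (hJdvd : ∀ ℓ, 1 ≤ ℓ → ℓ ≤ Qset.ncard → ℓ ∣ J₀)
    {q : G} (hq : q ∈ Qset) {ζ : ℕ → X}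
    (halive : ∀ k, S.st q ζ k = (S.Fit)^[k] q ∧ S.IsOneRay ((S.Fit)^[k] q) ∧
      ζ k = S.dirx ((S.Fit)^[k] q)) :
    EvP (S.st q ζ) J₀ ∧ EvP ζ J₀ ∧
      (∀ k x, x ≠ ζ k → S.res (S.st q ζ k) x ∈ Fstar) := by
  have horbQ : ∀ k, (S.Fit)^[k] q ∈ Qset := by
    intro k
    induction k with
    | zero => exact hq
    | succ k ih => rw [Function.iterate_succ_apply']; exact hQres _ ih _
  obtain ⟨ℓ, hℓ1, hℓ2, hℓ3⟩ := evp_orbit hQfin S.Fit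
    (fun u hu => hQres u hu (S.dirx u)) hq
  have horb : EvP (fun k => (S.Fit)^[k] q) J₀ := evp_dvd hℓ3 (hJdvd ℓ hℓ1 hℓ2)
  refine ⟨?_, ?_, ?_⟩
  · exact evp_of_evEq (K₀ := 0) (fun k _ => (halive k).1) horb
  · exact evp_of_evEq (K₀ := 0) (fun k _ => (halive k).2.2)
      (evp_map (fun u => S.dirx u) horb)
  · intro k x hx
    obtain ⟨h1, h2, h3⟩ := halive k
    rw [h1]
    have hxd : x ≠ S.dirx ((S.Fit)^[k] q) := by rwa [h3] at hx
    exact hFfin _ (hQres _ (horbQ k) x) (S.oneray_off_fin h2 hxd)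

theorem mainInd (hQfin : Qset.Finite)
    (hQres : ∀ q ∈ Qset, ∀ x : X, S.res q x ∈ Qset)
    (hFmul : ∀ a ∈ Fstar, ∀ b ∈ Fstar, a * b ∈ Fstar)
    (hFfin : ∀ q ∈ Qset, S.IsFinitary q → q ∈ Fstar)
    (hJdvd : ∀ ℓ, 1 ≤ ℓ → ℓ ≤ Qset.ncard → ℓ ∣ J₀) : ∀ (L : List G), (∀ q ∈ L, q ∈ Qset ∧ S.Tame q) → ∀ ζ : ℕ → X,
    (∃ K, ∀ k, K ≤ k → S.st L.prod ζ k = 1 ∧ S.outRay L.prod ζ k = ζ k) ∨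
    (EvP ζ J₀ ∧ EvP (S.st L.prod ζ) J₀ ∧
      ∃ K, ∀ k, K ≤ k → ∀ x, x ≠ ζ k → S.res (S.st L.prod ζ k) x ∈ Fstar) := by
  intro L
  induction L with
  | nil =>
    intro _ ζ
    left
    refine ⟨0, fun k _ => ?_⟩
    rw [List.prod_nil, S.st_one, S.outRay_one]
    exact ⟨rfl, rfl⟩
  | cons q L₂ ih =>
    intro hmem ζ
    have hq : q ∈ Qset ∧ S.Tame q := hmem q List.mem_cons_self
    have hmem₂ : ∀ r ∈ L₂, r ∈ Qset ∧ S.Tame r := fun r hr => hmem r (List.mem_cons_of_mem _ hr)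
    set ζm := S.outRay L₂.prod ζ with hζm_def
    have hst : ∀ k, S.st (q :: L₂).prod ζ k = S.st q ζm k * S.st L₂.prod ζ k := by
      intro k; rw [List.prod_cons, S.st_mul]
    have hout : ∀ k, S.outRay (q :: L₂).prod ζ k = S.lett (S.st q ζm k) (ζm k) := by
      intro k; rw [List.prod_cons, S.outRay_mul]; rfl
    rcases ih hmem₂ ζ with ⟨K₂, hdead₂⟩ | ⟨hζ, hB, K₂, hgerm₂⟩
    · -- tail eventually dies
      have hζmζ : ∀ k, K₂ ≤ k → ζm k = ζ k := fun k hk => (hdead₂ k hk).2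
      rcases S.single_dichotomy hq.2 ζm with ⟨K₁, hdead₁⟩ | halive
      · -- head dies too
        left
        refine ⟨max K₁ K₂, fun k hk => ?_⟩
        have h1 : S.st q ζm k = 1 := hdead₁ k (by omega)
        have h2 : S.st L₂.prod ζ k = 1 := (hdead₂ k (by omega)).1
        constructor
        · rw [hst, h1, h2, one_mul]
        · rw [hout, h1, S.lett_one, hζmζ k (by omega)]
      · -- head alive along ζm
        right
        obtain ⟨hA, hζmP, hgermA⟩ := alive_package S hQfin hQres hFfin hJdvd hq.1 halive
        have hζP : EvP ζ J₀ := evp_of_evEq (fun k hk => (hζmζ k hk).symm) hζmP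
        have hBP : EvP (S.st L₂.prod ζ) J₀ :=
          evp_of_evEq (fun k hk => (hdead₂ k hk).1) (evp_const 1 J₀)
        refine ⟨hζP, ?_, ⟨K₂, fun k hk x hx => ?_⟩⟩
        · exact evp_of_evEq (K₀ := 0) (fun k _ => hst k)
            (evp_map2 (fun a b => a * b) hA hBP)
        · rw [hst, (hdead₂ k hk).1, mul_one]
          exact hgermA k x (by rw [hζmζ k hk]; exact hx)
    · -- tail alive
      rcases S.single_dichotomy hq.2 ζm with ⟨K₁, hdead₁⟩ | halive
      · -- head dies
        right
        refine ⟨hζ, ?_, ⟨max K₁ K₂, fun k hk x hx => ?_⟩⟩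
        · exact evp_of_evEq (fun k hk => by rw [hst, hdead₁ k hk, one_mul]) hB
        · rw [hst, hdead₁ k (by omega), one_mul]
          exact hgerm₂ k (by omega) x hx
      · -- head alive
        right
        obtain ⟨hA, hζmP, hgermA⟩ := alive_package S hQfin hQres hFfin hJdvd hq.1 halive
        refine ⟨hζ, ?_, ⟨K₂, fun k hk x hx => ?_⟩⟩
        · exact evp_of_evEq (K₀ := 0) (fun k _ => hst k)
            (evp_map2 (fun a b => a * b) hA hB)
        · rw [hst, S.res_mul]
          apply hFmul
          · apply hgermA
            have h1 : ζm k = S.lett (S.st L₂.prod ζ k) (ζ k) := rfl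
            rw [h1]
            intro hcontr
            exact hx (S.lett_injective _ hcontr)
          · exact hgerm₂ k hk x hx

end MainInd

/-! ### Finiteness helpers -/

theorem level_finite (X : Type*) [Fintype X] (k : ℕ) :
    {v : List X | v.length = k}.Finite := by
  induction k with
  | zero =>
    apply Set.Finite.subset (Set.finite_singleton ([] : List X))
    intro v hv
    simp only [Set.mem_setOf_eq, List.length_eq_zero_iff] at hv
    simp [hv]
  | succ k ih =>
    apply Set.Finite.subset (Set.Finite.image2 (fun (x : X) (v : List X) => x :: v)
      Set.finite_univ ih)
    rintro v hv
    cases v with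
    | nil => simp at hv
    | cons x v =>
      simp only [Set.mem_setOf_eq, List.length_cons, Nat.add_left_inj] at hv
      exact Set.mem_image2_of_mem (Set.mem_univ x) hv

theorem take_of_prefix {α : Type*} {u z : List α} (h : u <+: z) :
    z.take u.length = u := by
  obtain ⟨t, rfl⟩ := h
  exact List.take_left

theorem prefix_cancel {α : Type*} {v a b : List α} (h : v ++ a <+: v ++ b) : a <+: b := by
  obtain ⟨t, ht⟩ := h
  rw [List.append_assoc] at ht
  exact ⟨t, List.append_cancel_left ht⟩

theorem uniform_of_finite {α : Type*} {s : Set α} (hs : s.Finite) {P : α → ℕ → Prop}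
    (h : ∀ a ∈ s, ∃ n, P a n)
    (hmono : ∀ a, a ∈ s → ∀ n n', n ≤ n' → P a n → P a n') :
    ∃ N, ∀ a ∈ s, P a N := by
  have h' : ∀ a : s, ∃ n, P a n := fun a => h a a.2
  choose f hf using h'
  rcases isEmpty_or_nonempty s with he | hne
  · exact ⟨0, fun a ha => (he.false ⟨a, ha⟩).elim⟩
  · have : Finite s := hs.to_subtype
    obtain ⟨a₀, ha₀⟩ := Finite.exists_max f
    exact ⟨f a₀, fun a ha => hmono a ha _ _ (ha₀ ⟨a, ha⟩) (hf ⟨a, ha⟩)⟩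

theorem ncard_biUnion_le {α : Type*} (n : ℕ) (f : ℕ → Set α) :
    (⋃ i ∈ Finset.range n, f i).ncard ≤ ∑ i ∈ Finset.range n, (f i).ncard := by
  induction n with
  | zero => simp
  | succ n ih =>
    rw [Finset.range_add_one, Finset.set_biUnion_insert, Finset.sum_insert
      (by simp)]
    exact le_trans (Set.ncard_union_le _ _) (by omega)

theorem ofFn_getD_of_length {α : Type*} {d : ℕ} {v : List α} (hv : v.length = d) (a : α) :
    List.ofFn (fun i : Fin d => v.getD i a) = v := by
  apply List.ext_getElem
  · simp [hv]
  · intro i h1 h2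
    simp only [List.getElem_ofFn]
    rw [List.getD_eq_getElem]

theorem fstar_finite (S : SelfSimilarAction G X) [Fintype X] [Nonempty X] (d : ℕ) :
    {f : G | ∀ v : List X, v.length = d → S.resW f v = 1}.Finite := by
  classical
  set s := {f : G | ∀ v : List X, v.length = d → S.resW f v = 1} with hs_def
  set a : X := Classical.arbitrary X
  set Φ : G → ((Fin d → X) → (Fin d → X)) :=
    fun f σ i => (S.act f (List.ofFn σ)).getD i a with hΦ_def
  have key : ∀ f ∈ s, ∀ f' ∈ s, Φ f = Φ f' → ∀ v : List X, S.act f v = S.act f' v := by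
    intro f hf f' hf' hΦ
    have step1 : ∀ v : List X, v.length = d → S.act f v = S.act f' v := by
      intro v hv
      have h1 : v = List.ofFn (fun i : Fin d => v.getD i a) := (ofFn_getD_of_length hv a).symm
      apply List.ext_getElem
      · rw [S.act_length, S.act_length]
      · intro i hi1 hi2
        have hΦσ := congrFun (congrFun hΦ (fun i : Fin d => v.getD i a))
          ⟨i, by rwa [S.act_length, hv] at hi1⟩
        simp only [Φ] at hΦσ
        rw [← h1] at hΦσ
        rwa [List.getD_eq_getElem _ _ hi1, List.getD_eq_getElem _ _ hi2] at hΦσ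
    have step2 : ∀ v : List X, d ≤ v.length → S.act f v = S.act f' v := by
      intro v hv
      have hsplit := List.take_append_drop d v
      have hlen : (v.take d).length = d := by rw [List.length_take]; omega
      rw [← hsplit, S.act_append, S.act_append, hf _ hlen, hf' _ hlen,
        step1 _ hlen]
    intro v
    rcases le_or_gt d v.length with h | h
    · exact step2 v h
    · have hpad : (v ++ List.replicate (d - v.length) a).length = d := by
        simp; omega
      have := step1 _ hpad
      rw [S.act_append, S.act_append] at this
      have h1 := congrArg (List.take v.length) this
      rw [← S.act_length (g := f) (v := v), List.take_left] at h1
      rw [h1, S.act_length, ← S.act_length (g := f') (v := v), List.take_left]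
  have hinj : Set.InjOn Φ s := by
    intro f hf f' hf' hΦ
    exact S.eq_of_act_eq (key f hf f' hf' hΦ)
  have : Finite ((Fin d → X) → (Fin d → X)) := by infer_instance
  exact Set.Finite.of_finite_image (Set.toFinite _) hinj

theorem finite_biUnion_range {α : Type*} {f : ℕ → Set α} (hf : ∀ i, (f i).Finite) (n : ℕ) :
    (⋃ i ∈ Finset.range n, f i).Finite := by
  induction n with
  | zero => simp
  | succ n ih =>
    rw [Finset.range_add_one, Finset.set_biUnion_insert]
    exact (hf n).union ih

/-! ### Deep states of bounded elements are tame -/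

theorem tame_of_deep (S : SelfSimilarAction G X) [Fintype X] [Nonempty X] (g : G)
    (hfs : (Set.range (S.resW g)).Finite)
    (hbd : ∃ C : ℕ, ∀ k : ℕ,
      {v : List X | v.length = k ∧ ∃ x : X, S.lett (S.resW g v) x ≠ x}.ncard ≤ C) :
    ∃ n₀, ∀ v : List X, n₀ ≤ v.length → S.Tame (S.resW g v) := by
  classical
  obtain ⟨C, hC⟩ := hbd
  set Act : ℕ → Set (List X) :=
    fun k => {v : List X | v.length = k ∧ ∃ x : X, S.lett (S.resW g v) x ≠ x} with hAct
  have hw : ∀ h : G, ∃ w : List X, h ∈ Set.range (S.resW g) → h ≠ 1 →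
      ∃ x, S.lett (S.resW h w) x ≠ x := by
    intro h
    by_cases hh : h = 1
    · exact ⟨[], fun _ h1 => absurd hh h1⟩
    · obtain ⟨w, x, hwx⟩ := S.exists_active_of_ne_one hh
      exact ⟨w, fun _ _ => ⟨x, hwx⟩⟩
  choose wfun hwfun using hw
  obtain ⟨D, hD⟩ : ∃ D, ∀ h ∈ Set.range (S.resW g), (wfun h).length ≤ D := by
    apply uniform_of_finite hfs (P := fun h n => (wfun h).length ≤ n)
    · exact fun h _ => ⟨(wfun h).length, le_refl _⟩
    · intro a _ n n' hnn' h; omega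
  set B := (D + 1) * C with hB
  set NT : ℕ → Set (List X) := fun k => {v | v.length = k ∧ S.resW g v ≠ 1} with hNT
  have hNTfin : ∀ k, (NT k).Finite :=
    fun k => (level_finite X k).subset (fun v hv => hv.1)
  have hActfin : ∀ k, (Act k).Finite :=
    fun k => (level_finite X k).subset (fun v hv => hv.1)
  have hNTcard : ∀ k, (NT k).ncard ≤ B := by
    intro k
    set φ : List X → List X := fun v => v ++ wfun (S.resW g v) with hφ
    have himg : φ '' NT k ⊆ ⋃ d ∈ Finset.range (D + 1), Act (k + d) := by
      rintro _ ⟨v, hv, rfl⟩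
      have hmem : S.resW g v ∈ Set.range (S.resW g) := ⟨v, rfl⟩
      obtain ⟨x, hx⟩ := hwfun (S.resW g v) hmem hv.2
      have hd := hD _ hmem
      apply Set.mem_biUnion
        (Finset.mem_range.mpr (by omega : (wfun (S.resW g v)).length < D + 1))
      refine ⟨by simp only [φ, List.length_append, hv.1], ⟨x, ?_⟩⟩
      rwa [S.resW_append]
    have hinj : Set.InjOn φ (NT k) := by
      intro u hu v hv huv
      have h1 : (u ++ wfun (S.resW g u)).take k = u := by
        rw [← hu.1]; exact List.take_left
      have h2 : (v ++ wfun (S.resW g v)).take k = v := by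
        rw [← hv.1]; exact List.take_left
      rw [← h1, ← h2]
      simp only [φ] at huv
      rw [huv]
    calc (NT k).ncard = (φ '' NT k).ncard := (Set.ncard_image_of_injOn hinj).symm
      _ ≤ (⋃ d ∈ Finset.range (D + 1), Act (k + d)).ncard :=
          Set.ncard_le_ncard himg (finite_biUnion_range (fun d => hActfin (k + d)) _)
      _ ≤ ∑ d ∈ Finset.range (D + 1), (Act (k + d)).ncard := ncard_biUnion_le _ _
      _ ≤ ∑ _d ∈ Finset.range (D + 1), C := Finset.sum_le_sum (fun d _ => hC _)
      _ = B := by rw [Finset.sum_const, Finset.card_range, smul_eq_mul]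
  set NF : ℕ → Set (List X) := fun k => {v | v.length = k ∧ ¬ S.IsFinitary (S.resW g v)}
    with hNF
  have hNFsub : ∀ k, NF k ⊆ NT k := by
    intro k v hv
    exact ⟨hv.1, fun h1 => hv.2 (S.isFinitary_of_eq_one h1)⟩
  have hNFfin : ∀ k, (NF k).Finite := fun k => (hNTfin k).subset (hNFsub k)
  have hNFcard : ∀ k, (NF k).ncard ≤ B :=
    fun k => le_trans (Set.ncard_le_ncard (hNFsub k) (hNTfin k)) (hNTcard k)
  have hdesc : ∀ (i : ℕ) (v : List X), ∃ z : List X, z.length = i ∧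
      (¬ S.IsFinitary (S.resW g v) → ¬ S.IsFinitary (S.resW g (v ++ z))) := by
    intro i
    induction i with
    | zero => exact fun v => ⟨[], rfl, fun hv => by rwa [List.append_nil]⟩
    | succ i ih =>
      intro v
      by_cases hv : S.IsFinitary (S.resW g v)
      · exact ⟨List.replicate (i + 1) (Classical.arbitrary X), by simp,
          fun h => absurd hv h⟩
      · obtain ⟨x, hx⟩ := S.exists_nonfin_child hv
        obtain ⟨z, hz1, hz2⟩ := ih (v ++ [x])
        refine ⟨x :: z, by simp [hz1], fun _ => ?_⟩
        have := hz2 (by rwa [S.resW_append, S.resW_singleton])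
        rwa [List.append_assoc] at this
        
  choose Z hZlen hZnf using hdesc
  set a : ℕ → ℕ := fun k => (NF k).ncard with ha
  have hamono : Monotone a := by
    apply monotone_nat_of_le_succ
    intro k
    set ψ : List X → List X := fun u => u ++ Z 1 u with hψ
    have himg : ψ '' NF k ⊆ NF (k + 1) := by
      rintro _ ⟨u, hu, rfl⟩
      exact ⟨by simp only [ψ, List.length_append, hu.1, hZlen], hZnf 1 u hu.2⟩
    have hinj : Set.InjOn ψ (NF k) := by
      intro u hu u' hu' huu
      have h1 : (ψ u).take k = u := by
        simp only [ψ]; rw [← hu.1]; exact List.take_left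
      have h2 : (ψ u').take k = u' := by
        simp only [ψ]; rw [← hu'.1]; exact List.take_left
      rw [← h1, ← h2, huu]
    calc a k = (ψ '' NF k).ncard := (Set.ncard_image_of_injOn hinj).symm
      _ ≤ a (k + 1) := Set.ncard_le_ncard himg (hNFfin _)
  have hbdd : BddAbove (Set.range a) := by
    refine ⟨B, ?_⟩
    rintro _ ⟨k, rfl⟩
    exact hNFcard k
  obtain ⟨n₀, hn₀⟩ := Nat.sSup_mem (Set.range_nonempty a) hbdd
  have hstab : ∀ k, n₀ ≤ k → a k = a n₀ := by
    intro k hk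
    refine le_antisymm ?_ (hamono hk)
    rw [hn₀]
    exact le_csSup hbdd ⟨k, rfl⟩
  refine ⟨n₀, fun v hv => ?_⟩
  by_cases hfin : S.IsFinitary (S.resW g v)
  · exact Or.inl hfin
  · refine Or.inr ⟨hfin, ?_⟩
    intro u₁ u₂ hu₁ hu₂
    by_contra hcomp
    push_neg at hcomp
    obtain ⟨hc1, hc2⟩ := hcomp
    rw [← S.resW_append] at hu₁ hu₂
    set j := v.length with hj
    set M := max u₁.length u₂.length with hM
    set A := (v ++ u₁) ++ Z (M - u₁.length) (v ++ u₁) with hA_def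
    set Bd := (v ++ u₂) ++ Z (M - u₂.length) (v ++ u₂) with hBd_def
    have hA : A ∈ NF (j + M) := by
      refine ⟨?_, hZnf _ _ hu₁⟩
      simp only [A, List.length_append, hZlen]
      omega
    have hBd : Bd ∈ NF (j + M) := by
      refine ⟨?_, hZnf _ _ hu₂⟩
      simp only [Bd, List.length_append, hZlen]
      omega
    have hvA : v <+: A := ⟨u₁ ++ Z (M - u₁.length) (v ++ u₁), by rw [← List.append_assoc]⟩
    have hvBd : v <+: Bd := ⟨u₂ ++ Z (M - u₂.length) (v ++ u₂), by rw [← List.append_assoc]⟩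
    have hAB : A ≠ Bd := by
      intro hEq
      have h1 : v ++ u₁ <+: A := ⟨_, rfl⟩
      have h2 : v ++ u₂ <+: A := hEq ▸ (⟨_, rfl⟩ : v ++ u₂ <+: Bd)
      rcases List.prefix_or_prefix_of_prefix h1 h2 with hp | hp
      · exact hc1 (prefix_cancel hp)
      · exact hc2 (prefix_cancel hp)
    set Φ : List X → List X := fun u => if u = v then A else u ++ Z M u with hΦ
    have htake : ∀ u ∈ NF j, (Φ u).take j = u := by
      intro u hu
      simp only [Φ]
      by_cases huv : u = v
      · rw [if_pos huv, huv, hj]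
        exact take_of_prefix hvA
      · rw [if_neg huv, ← hu.1]
        exact List.take_left
    have himg : Φ '' NF j ⊆ NF (j + M) := by
      rintro _ ⟨u, hu, rfl⟩
      simp only [Φ]
      by_cases huv : u = v
      · rw [if_pos huv]; exact hA
      · rw [if_neg huv]
        exact ⟨by simp only [List.length_append, hu.1, hZlen], hZnf _ _ hu.2⟩
    have hinj : Set.InjOn Φ (NF j) := by
      intro u hu u' hu' huu
      rw [← htake u hu, ← htake u' hu', huu]
    have hBdnot : Bd ∉ Φ '' NF j := by
      rintro ⟨u, hu, hEq⟩
      have h1 : u = v := by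
        have := htake u hu
        rw [hEq] at this
        rw [← this, hj]
        exact take_of_prefix hvBd
      rw [h1] at hEq
      simp only [Φ, if_pos rfl] at hEq
      exact hAB hEq
    have hcount : a j + 1 ≤ a (j + M) := by
      calc a j + 1 = (Φ '' NF j).ncard + 1 := by rw [Set.ncard_image_of_injOn hinj]
        _ = (insert Bd (Φ '' NF j)).ncard :=
            (Set.ncard_insert_of_notMem hBdnot ((hNFfin j).image Φ)).symm
        _ ≤ a (j + M) := Set.ncard_le_ncard
            (Set.insert_subset hBd himg) (hNFfin _)
    have e1 : a j = a n₀ := hstab j hv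
    have e2 : a (j + M) = a n₀ := hstab (j + M) (by omega)
    omega

/-! ### Restriction lists -/

def restList (S : SelfSimilarAction G X) : List G → List X → List G
  | [], _ => []
  | q :: L, v => S.resW q (S.act L.prod v) :: S.restList L v

theorem restList_prod (S : SelfSimilarAction G X) (L : List G) (v : List X) :
    (S.restList L v).prod = S.resW L.prod v := by
  induction L with
  | nil => simp [restList, S.resW_one]
  | cons q L ih =>
    simp only [restList, List.prod_cons]
    rw [ih, ← S.resW_mul]

theorem restList_mem (S : SelfSimilarAction G X) {L : List G} {v : List X} {r : G}
    (hr : r ∈ S.restList L v) :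
    ∃ q ∈ L, ∃ u : List X, u.length = v.length ∧ r = S.resW q u := by
  induction L with
  | nil => simp [restList] at hr
  | cons q L ih =>
    simp only [restList, List.mem_cons] at hr
    rcases hr with h | h
    · exact ⟨q, List.mem_cons_self, S.act L.prod v, S.act_length _ _, h⟩
    · obtain ⟨q', hq', u, hu, hru⟩ := ih h
      exact ⟨q', List.mem_cons_of_mem _ hq', u, hu, hru⟩

theorem exists_word_of_mem_closure {T : Set G} {c : G} (h : c ∈ Subgroup.closure T) :
    ∃ L : List G, (∀ y ∈ L, y ∈ T ∨ y⁻¹ ∈ T) ∧ L.prod = c := by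
  induction h using Subgroup.closure_induction with
  | mem x hx => exact ⟨[x], by simp [hx], by simp⟩
  | one => exact ⟨[], by simp, by simp⟩
  | mul x y hx hy ihx ihy =>
    obtain ⟨L1, h1, e1⟩ := ihx; obtain ⟨L2, h2, e2⟩ := ihy
    exact ⟨L1 ++ L2, by
      intro z hz; rcases List.mem_append.mp hz with h | h
      exacts [h1 z h, h2 z h], by simp [e1, e2]⟩
  | inv x hx ihx =>
    obtain ⟨L, h1, e1⟩ := ihx
    refine ⟨(L.map Inv.inv).reverse, ?_, ?_⟩
    · intro z hz
      simp only [List.mem_reverse, List.mem_map] at hz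
      obtain ⟨y, hy, rfl⟩ := hz
      rcases h1 y hy with h | h
      · right; simpa using h
      · left; exact h
    · rw [List.prod_reverse_noncomm]; simp [← e1]

end SelfSimilarAction

open SelfSimilarAction


/-- Every finitely generated self-similar group of
automorphisms of `X^*` (over a finite alphabet) all of whose elements are
bounded finite-state automorphisms is contracting: its nucleus is finite. -/
theorem bounded_selfSimilar_is_contracting
    {G X : Type*} [Group G] [Fintype X] (S : SelfSimilarAction G X)
    (hfg : Group.FG G) (hb : ∀ g : G, S.Bounded g) :
    S.nucleus.Finite := by
  classical
  rcases isEmpty_or_nonempty X with hX | hX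
  · apply Set.Finite.subset Set.finite_empty
    rintro h ⟨g, hg⟩
    obtain ⟨v, hv1, -⟩ := hg 1
    cases v with
    | nil => simp at hv1
    | cons x _ => exact (IsEmpty.false x).elim
  obtain ⟨T, hTtop, hTfin⟩ := Group.fg_iff.mp hfg
  set Qset : Set G := ⋃ t ∈ T ∪ (Inv.inv '' T), Set.range (S.resW t) with hQ_def
  have hQfin : Qset.Finite :=
    Set.Finite.biUnion (hTfin.union (hTfin.image _)) (fun t _ => (hb t).1)
  have hQres : ∀ q ∈ Qset, ∀ x : X, S.res q x ∈ Qset := by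
    intro q hq x
    simp only [hQ_def, Set.mem_iUnion, Set.mem_range, exists_prop] at hq ⊢
    obtain ⟨t, ht, u, hu⟩ := hq
    exact ⟨t, ht, u ++ [x], by rw [S.resW_append, hu, S.resW_singleton]⟩
  have hQresW : ∀ q ∈ Qset, ∀ u : List X, S.resW q u ∈ Qset := by
    intro q hq u
    induction u generalizing q with
    | nil => simpa [S.resW_nil] using hq
    | cons x u ih => rw [S.resW_cons]; exact ih _ (hQres q hq x)
  have hTQ : ∀ y : G, (y ∈ T ∨ y⁻¹ ∈ T) → y ∈ Qset := by
    intro y hy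
    simp only [hQ_def, Set.mem_iUnion, Set.mem_range, exists_prop]
    refine ⟨y, ?_, [], rfl⟩
    rcases hy with h | h
    · exact Set.mem_union_left _ h
    · exact Set.mem_union_right _ ⟨y⁻¹, h, inv_inv y⟩
  obtain ⟨n₀, hn₀⟩ : ∃ n₀, ∀ q ∈ Qset, ∀ v : List X, n₀ ≤ v.length →
      S.Tame (S.resW q v) := by
    apply uniform_of_finite hQfin
      (P := fun q n => ∀ v : List X, n ≤ v.length → S.Tame (S.resW q v))
    · exact fun q _ => S.tame_of_deep q (hb q).1 (hb q).2
    · intro a _ n n' hle h v hv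
      exact h v (by omega)
  obtain ⟨d₀, hd₀⟩ : ∃ d₀, ∀ q ∈ Qset, S.IsFinitary q → ∀ v : List X,
      d₀ ≤ v.length → S.resW q v = 1 := by
    apply uniform_of_finite hQfin
      (P := fun q n => S.IsFinitary q → ∀ v : List X, n ≤ v.length → S.resW q v = 1)
    · intro q _
      by_cases hf : S.IsFinitary q
      · obtain ⟨d, hd⟩ := hf
        exact ⟨d, fun _ => S.fin_mono hd⟩
      · exact ⟨0, fun h => absurd h hf⟩
    · intro a _ n n' hle h hfa v hv
      exact h hfa v (by omega)
  set Fstar : Set G := {f : G | ∀ v : List X, v.length = d₀ → S.resW f v = 1} with hF_def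
  have hF1 : (1 : G) ∈ Fstar := fun v _ => S.resW_one v
  have hFmul : ∀ a ∈ Fstar, ∀ b ∈ Fstar, a * b ∈ Fstar := by
    intro a ha b hb' v hv
    rw [S.resW_mul, ha _ (by rw [S.act_length]; exact hv), hb' _ hv, one_mul]
  have hFfin : ∀ q ∈ Qset, S.IsFinitary q → q ∈ Fstar :=
    fun q hq hfq v hv => hd₀ q hq hfq v (le_of_eq hv.symm)
  have hFstarfin : Fstar.Finite := S.fstar_finite d₀
  set J₀ : ℕ := (Qset.ncard + 1).factorial with hJ₀_def
  have hJ₀pos : 1 ≤ J₀ := Nat.factorial_pos _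
  have hJdvd : ∀ ℓ, 1 ≤ ℓ → ℓ ≤ Qset.ncard → ℓ ∣ J₀ :=
    fun ℓ h1 h2 => Nat.dvd_factorial h1 (by omega)
  set C : Set G := {c : G | ∃ w : List X, w ≠ [] ∧ S.resW c w = c} with hC_def
  -- Step A : the nucleus consists of states of cycle elements
  have hsub : S.nucleus ⊆ ⋃ c ∈ C, Set.range (S.resW c) := by
    intro h hh
    obtain ⟨g, hg⟩ := hh
    have hgfin := (hb g).1
    set N := (Set.range (S.resW g)).ncard with hN
    obtain ⟨v, hvlen, hvres⟩ := hg (N + 1)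
    have key : ∀ i j : ℕ, i < j → j ≤ v.length →
        S.resW g (v.take i) = S.resW g (v.take j) →
        h ∈ ⋃ c ∈ C, Set.range (S.resW c) := by
      intro i j hij hjv hEq
      set c := S.resW g (v.take i) with hc
      have hsplit : v.take i ++ (v.take j).drop i = v.take j := by
        have h1 : (v.take j).take i = v.take i := by
          rw [List.take_take, min_eq_left (le_of_lt hij)]
        rw [← h1]
        exact List.take_append_drop i (v.take j)
      have hcw : S.resW c ((v.take j).drop i) = c := by
        rw [hc, ← S.resW_append, hsplit, ← hEq]
      have hlen2 : ((v.take j).drop i).length = j - i := by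
        rw [List.length_drop, List.length_take]
        omega
      have hwne : (v.take j).drop i ≠ [] := by
        intro hnil
        rw [hnil] at hlen2
        simp at hlen2
        omega
      have hCc : c ∈ C := ⟨_, hwne, hcw⟩
      have hfull : h = S.resW c (v.drop j) := by
        conv_lhs => rw [← hvres, ← List.take_append_drop j v]
        rw [S.resW_append, ← hEq]
      exact Set.mem_biUnion hCc ⟨v.drop j, hfull.symm⟩
    have hmaps : ∀ i ∈ Finset.range (N + 1),
        S.resW g (v.take i) ∈ hgfin.toFinset :=
      fun i _ => hgfin.mem_toFinset.mpr ⟨v.take i, rfl⟩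
    have hcard : hgfin.toFinset.card < (Finset.range (N + 1)).card := by
      rw [Finset.card_range, ← Set.ncard_eq_toFinset_card _ hgfin]
      omega
    obtain ⟨i, hi, j, hj, hne, heq⟩ :=
      Finset.exists_ne_map_eq_of_card_lt_of_maps_to hcard hmaps
    simp only [Finset.mem_range] at hi hj
    rcases hne.lt_or_gt with hlt | hlt
    · exact key i j hlt (by omega) heq
    · exact key j i hlt (by omega) heq.symm
  -- Step B : the set of cycle elements is finite
  have hCfin : C.Finite := by
    have key : ∀ c ∈ C, c ≠ 1 → ∃ (η : ℕ → X) (cs : ℕ → G),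
        cs 0 = c ∧ (∀ k, cs (k + 1) = S.res (cs k) (η k)) ∧
        (∀ k, η (k + J₀) = η k) ∧ (∀ k, cs (k + J₀) = cs k) ∧
        (∀ k x, x ≠ η k → S.res (cs k) x ∈ Fstar) := by
      rintro c ⟨w, hwne, hcw⟩ hc1
      have hwpos : 1 ≤ w.length := List.length_pos_iff.mpr hwne
      set η : ℕ → X := fun k => w.get ⟨k % w.length, Nat.mod_lt _ (by omega)⟩ with hη_def
      have hηper : ∀ k, η (k + w.length) = η k := by
        intro k
        simp only [hη_def]
        simp only [Nat.add_mod_right]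
      have hprew : pre η w.length = w := by
        apply List.ext_getElem (by simp [pre_length])
        intro i h1 h2
        have h3 : i < w.length := h2
        simp only [pre, List.getElem_map, List.getElem_range, hη_def]
        simp only [Nat.mod_eq_of_lt h3, List.get_eq_getElem]
      have hcper : ∀ k, S.st c η (k + w.length) = S.st c η k := by
        intro k
        have h1 : k + w.length = w.length + k := by omega
        have h2 : (fun i => η (w.length + i)) = η := by
          funext i
          rw [Nat.add_comm]
          exact hηper i
        rw [h1, st, pre_add, S.resW_append, hprew, hcw, h2]
        rfl
      have hcmul : ∀ m, S.st c η (m * w.length) = c := by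
        intro m
        have := global_iter hcper m 0
        simpa [S.st_zero] using this
      have hneq1 : ∀ k, S.st c η k ≠ 1 := by
        intro k hk1
        apply hc1
        have h1 : k ≤ k * w.length := Nat.le_mul_of_pos_right k (by omega)
        have h2 := S.st_die hk1 (k * w.length) h1
        rw [hcmul k] at h2
        exact h2
      have hcmem : c ∈ Subgroup.closure T := by rw [hTtop]; exact Subgroup.mem_top c
      obtain ⟨L₀, hL₀mem, hL₀prod⟩ := exists_word_of_mem_closure hcmem
      set L := S.restList L₀ (pre η ((n₀ + 1) * w.length)) with hL_def
      have hLmem : ∀ r ∈ L, r ∈ Qset ∧ S.Tame r := by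
        intro r hr
        obtain ⟨q, hqL, u, hulen, rfl⟩ := S.restList_mem hr
        have hqQ : q ∈ Qset := hTQ q (hL₀mem q hqL)
        have hule : n₀ ≤ u.length := by
          rw [hulen, pre_length]
          calc n₀ ≤ (n₀ + 1) * 1 := by omega
            _ ≤ (n₀ + 1) * w.length := Nat.mul_le_mul_left _ hwpos
        exact ⟨hQresW q hqQ u, hn₀ q hqQ u hule⟩
      have hLprod : L.prod = c := by
        rw [hL_def, S.restList_prod, hL₀prod]
        exact hcmul (n₀ + 1)
      rcases mainInd S hQfin hQres hFmul hFfin hJdvd L hLmem η with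
        ⟨K, hK⟩ | ⟨hηevp, hstevp, K, hgerm⟩
      · exfalso
        have := (hK K le_rfl).1
        rw [hLprod] at this
        exact hneq1 K this
      · rw [hLprod] at hstevp hgerm
        have hηglob : ∀ k, η (k + J₀) = η k := evp_global hηper hwpos hηevp
        have hstglob : ∀ k, S.st c η (k + J₀) = S.st c η k :=
          evp_global hcper hwpos hstevp
        have hgermall : ∀ k x, x ≠ η k → S.res (S.st c η k) x ∈ Fstar := by
          intro k x hx
          have hK' : K ≤ k + K * J₀ := by nlinarith
          have h1 : S.st c η (k + K * J₀) = S.st c η k := global_iter hstglob K k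
          have h2 : η (k + K * J₀) = η k := global_iter hηglob K k
          have h3 := hgerm (k + K * J₀) hK' x (by rw [h2]; exact hx)
          rwa [h1] at h3
        exact ⟨η, S.st c η, S.st_zero c η, fun k => S.st_succ c η k,
          hηglob, hstglob, hgermall⟩
    set C' : Set G := {c : G | c ∈ C ∧ c ≠ 1} with hC'_def
    have key' : ∀ c : C', ∃ (η : ℕ → X) (cs : ℕ → G),
        cs 0 = (c : G) ∧ (∀ k, cs (k + 1) = S.res (cs k) (η k)) ∧
        (∀ k, η (k + J₀) = η k) ∧ (∀ k, cs (k + J₀) = cs k) ∧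
        (∀ k x, x ≠ η k → S.res (cs k) x ∈ Fstar) :=
      fun c => key c c.2.1 c.2.2
    choose η cs h0 hsucc hηper' hcsper hgerm using key'
    set Ψ : C' → (Fin J₀ → X) × (Fin J₀ → (X → X) × (X → Fstar)) :=
      fun c => (fun j => η c j, fun j =>
        (fun x => S.lett (cs c j) x,
         fun x => if hx : x = η c j then ⟨1, hF1⟩
           else ⟨S.res (cs c j) x, hgerm c j x hx⟩)) with hΨ_def
    have hinj : Function.Injective Ψ := by
      intro c c' hcc
      have h1 := congrArg Prod.fst hcc
      have h2 := congrArg Prod.snd hcc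
      simp only [hΨ_def] at h1 h2
      have hηeq : ∀ j : ℕ, η c j = η c' j := by
        intro j
        have hj : j % J₀ < J₀ := Nat.mod_lt _ (by omega)
        have e1 : η c j = η c (j % J₀) := global_mod (hηper' c) hJ₀pos j
        have e2 : η c' j = η c' (j % J₀) := global_mod (hηper' c') hJ₀pos j
        rw [e1, e2]
        exact congrFun h1 ⟨j % J₀, hj⟩
      have hcsmod : ∀ (d : C') (j : ℕ), cs d j = cs d (j % J₀) :=
        fun d j => global_mod (hcsper d) hJ₀pos j
      have hletteq : ∀ (j : ℕ) (x : X), S.lett (cs c j) x = S.lett (cs c' j) x := by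
        intro j x
        have hj : j % J₀ < J₀ := Nat.mod_lt _ (by omega)
        have h3 := congrFun (congrArg Prod.fst (congrFun h2 ⟨j % J₀, hj⟩)) x
        rw [hcsmod c j, hcsmod c' j]
        exact h3
      have hreseq : ∀ (j : ℕ) (x : X), x ≠ η c j →
          S.res (cs c j) x = S.res (cs c' j) x := by
        intro j x hx
        have hj : j % J₀ < J₀ := Nat.mod_lt _ (by omega)
        have hx1 : x ≠ η c (j % J₀) := by
          rw [← global_mod (hηper' c) hJ₀pos j]
          exact hx
        have hx2 : x ≠ η c' (j % J₀) := by
          rw [← global_mod (hηper' c') hJ₀pos j, ← hηeq j]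
          exact hx
        have h3 := congrFun (congrArg Prod.snd (congrFun h2 ⟨j % J₀, hj⟩)) x
        rw [show ((⟨j % J₀, hj⟩ : Fin J₀) : ℕ) = j % J₀ from rfl] at h3
        dsimp only at h3
        rw [dif_neg hx1, dif_neg hx2] at h3
        have h4 := congrArg Subtype.val h3
        rw [hcsmod c j, hcsmod c' j]
        exact h4
      have hact : ∀ (v : List X) (j : ℕ), S.act (cs c j) v = S.act (cs c' j) v := by
        intro v
        induction v with
        | nil => intro j; rw [S.act_nil, S.act_nil]
        | cons x v ih =>
          intro j
          rw [S.self_sim, S.self_sim, hletteq j x]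
          by_cases hx : x = η c j
          · have e1 : S.res (cs c j) x = cs c (j + 1) := by rw [hx, ← hsucc c j]
            have e2 : S.res (cs c' j) x = cs c' (j + 1) := by
              rw [hx, hηeq j, ← hsucc c' j]
            rw [e1, e2, ih (j + 1)]
          · rw [hreseq j x hx]
      have hcc' : (c : G) = (c' : G) := by
        rw [← h0 c, ← h0 c']
        exact S.eq_of_act_eq (fun v => hact v 0)
      exact Subtype.ext hcc'
    have hFs : Finite Fstar := hFstarfin.to_subtype
    have hC'fin : C'.Finite := Set.finite_coe_iff.mp (Finite.of_injective Ψ hinj)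
    have hCsub : C ⊆ insert 1 C' := by
      intro c hc
      by_cases hc1 : c = 1
      · exact Set.mem_insert_iff.mpr (Or.inl hc1)
      · exact Set.mem_insert_iff.mpr (Or.inr ⟨hc, hc1⟩)
    exact (hC'fin.insert 1).subset hCsub
  exact Set.Finite.subset (Set.Finite.biUnion hCfin (fun c _ => (hb c).1)) hsub
end

section
/- A finite-state automorphism q of the rooted tree X^* is bounded if and only if q is defined by some finite automaton in whose Moore diagram every two non-trivial cycles are disjoint and are not connected by a directed path. -/
/-- The action of a state of an automaton on finite words. -/
def stateAct {Q X : Type*} (π : Q → X → Q) (lo : Q → X → X) : Q → List X → List X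
  | _, [] => []
  | q, x :: w => lo q x :: stateAct π lo (π q x) w

/-- The state reached from `p` after reading the word `v`. -/
def reachState {Q X : Type*} (π : Q → X → Q) (p : Q) (v : List X) : Q :=
  v.foldl π p

/-- The vertices of the closed path (cycle) starting at `p` and labelled by the
word `v` in the Moore diagram. -/
def cycleVerts {Q X : Type*} (π : Q → X → Q) (p : Q) (v : List X) : Set Q :=
  {s | ∃ u : List X, u <+: v ∧ reachState π p u = s}

/-- The edges of the closed path (cycle) starting at `p` labelled by `v`:
an edge is a pair (state, input letter). -/
def cycleEdges {Q X : Type*} (π : Q → X → Q) (p : Q) (v : List X) : Set (Q × X) :=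
  {e | ∃ u w : List X, v = u ++ e.2 :: w ∧ reachState π p u = e.1}

/-- `(p, v)` is a cycle of the Moore diagram: a nonempty closed path at `p`. -/
def IsCycle {Q X : Type*} (π : Q → X → Q) (p : Q) (v : List X) : Prop :=
  v ≠ [] ∧ reachState π p v = p

/-- A cycle is trivial if its only vertex is a state acting trivially on `X^*`. -/
def IsTrivialCycle {Q X : Type*} (π : Q → X → Q) (lo : Q → X → X)
    (p : Q) (v : List X) : Prop :=
  ∃ s : Q, cycleVerts π p v = {s} ∧ ∀ w : List X, stateAct π lo s w = w
namespace SidkiAux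

variable {Q X : Type*} (π : Q → X → Q) (lo : Q → X → X)

@[simp] lemma reach_nil (p : Q) : reachState π p [] = p := rfl

@[simp] lemma reach_cons (p : Q) (x : X) (v : List X) :
    reachState π p (x :: v) = reachState π (π p x) v := rfl

@[simp] lemma reach_append (p : Q) (u v : List X) :
    reachState π p (u ++ v) = reachState π (reachState π p u) v :=
  List.foldl_append ..

@[simp] lemma stateAct_nil (p : Q) : stateAct π lo p [] = [] := rfl

@[simp] lemma stateAct_cons (p : Q) (x : X) (w : List X) :
    stateAct π lo p (x :: w) = lo p x :: stateAct π lo (π p x) w := rfl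

@[simp] lemma stateAct_length (p : Q) (w : List X) :
    (stateAct π lo p w).length = w.length := by
  induction w generalizing p with
  | nil => rfl
  | cons x w ih => simp [ih]

lemma stateAct_append (p : Q) (u w : List X) :
    stateAct π lo p (u ++ w) = stateAct π lo p u ++ stateAct π lo (reachState π p u) w := by
  induction u generalizing p with
  | nil => rfl
  | cons x u ih => simp [ih]

/-- a state acting trivially: all reachable states act trivially too. -/
lemma trivial_reach (p : Q) (h : ∀ w, stateAct π lo p w = w) (u : List X) :
    ∀ w, stateAct π lo (reachState π p u) w = w := by
  intro w
  have h1 := h (u ++ w)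
  rw [stateAct_append, h u] at h1
  exact List.append_cancel_left h1

lemma nontriv_of_reach (p : Q) (u : List X)
    (h : ∃ w, stateAct π lo (reachState π p u) w ≠ w) : ∃ w, stateAct π lo p w ≠ w := by
  by_contra hc
  push_neg at hc
  obtain ⟨w, hw⟩ := h
  exact hw (trivial_reach π lo p hc u w)

lemma base_mem_cycleVerts (p : Q) (v : List X) : p ∈ cycleVerts π p v :=
  ⟨[], ⟨v, rfl⟩, rfl⟩

/-- a cycle whose base does not act trivially is not a trivial cycle -/
lemma not_trivialCycle_of_nontriv (p : Q) (v : List X)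
    (h : ∃ w, stateAct π lo p w ≠ w) :
    ¬ ∃ s : Q, cycleVerts π p v = {s} ∧ ∀ w : List X, stateAct π lo s w = w := by
  rintro ⟨s, hv, hs⟩
  have : p = s := by
    have := base_mem_cycleVerts π p v
    rwa [hv, Set.mem_singleton_iff] at this
  obtain ⟨w, hw⟩ := h
  exact hw (this ▸ hs w)

/-- membership in cycleEdges via index -/
lemma mem_cycleEdges_iff (p : Q) (v : List X) (s : Q) (x : X) :
    (s, x) ∈ cycleEdges π p v ↔
      ∃ r : ℕ, ∃ h : r < v.length, reachState π p (v.take r) = s ∧ v.get ⟨r, h⟩ = x := by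
  constructor
  · rintro ⟨u, w, hv, hu⟩
    refine ⟨u.length, by simp [hv], ?_, ?_⟩
    · rwa [hv, List.take_left]
    · simp [hv, List.getElem_append_right]
  · rintro ⟨r, h, hs, hx⟩
    refine ⟨v.take r, v.drop (r + 1), ?_, hs⟩
    rw [← hx]
    simp only [List.get_eq_getElem]
    rw [← List.drop_eq_getElem_cons, List.take_append_drop]


section lists
variable {A : Type*}

/-- If `l = Aw ++ x :: B` and `l = C ++ D` with `|Aw| + 1 ≤ |C|`,
then `C = Aw ++ x :: g` for some `g`. -/
lemma trunc_lemma {l C D Aw B : List A} {x : A} (h1 : l = Aw ++ x :: B) (h2 : l = C ++ D)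
    (h : Aw.length + 1 ≤ C.length) : ∃ g, C = Aw ++ x :: g := by
  obtain ⟨m, hm⟩ : ∃ m, C.length - Aw.length = m + 1 := ⟨C.length - Aw.length - 1, by omega⟩
  have hC : C = l.take C.length := by rw [h2, List.take_left]
  rw [h1, List.take_append, List.take_of_length_le (by omega), hm,
    List.take_succ_cons] at hC
  exact ⟨B.take m, hC⟩

/-- slice of a list -/
def slice (v : List A) (a b : ℕ) : List A := (v.take b).drop a

lemma take_add_slice (v : List A) {a b : ℕ} (hab : a ≤ b) :
    v.take b = v.take a ++ slice v a b := by
  have h : v.take a = (v.take b).take a := by rw [List.take_take, Nat.min_eq_left hab]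
  rw [h, slice, List.take_append_drop]

lemma slice_length (v : List A) {a b : ℕ} (hb : b ≤ v.length) :
    (slice v a b).length = b - a := by
  simp [slice]; omega

lemma slice_ne_nil (v : List A) {a b : ℕ} (hab : a < b) (hb : b ≤ v.length) :
    slice v a b ≠ [] := by
  have := slice_length v (a := a) hb
  intro h; rw [h] at this; simp at this; omega

lemma slice_surgery (v : List A) {a r b : ℕ} (har : a ≤ r) (hrb : r < b) (hr : r < v.length) :
    slice v a b = slice v a r ++ v[r] :: slice v (r+1) b := by
  have hrec : r < (v.take b).length := by simp; omega
  have h2 := List.drop_eq_getElem_cons hrec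
  rw [List.getElem_take] at h2
  have h1 : v.take b = v.take r ++ (v[r] :: (v.take b).drop (r+1)) := by
    calc v.take b = (v.take b).take r ++ (v.take b).drop r := (List.take_append_drop ..).symm
    _ = v.take r ++ (v[r] :: (v.take b).drop (r+1)) := by
        rw [List.take_take, Nat.min_eq_left (le_of_lt hrb), h2]
  show (v.take b).drop a = _
  rw [h1, List.drop_append_of_le_length (by simp; omega)]
  rfl

lemma take_succ_elem (v : List A) {r : ℕ} (hr : r < v.length) :
    v.take (r+1) = v.take r ++ [v[r]] := by
  rw [List.take_succ, List.getElem?_eq_getElem hr]; rfl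

end lists

end SidkiAux
namespace SidkiAux
section Hdep

variable {Q X : Type*} {π : Q → X → Q} {lo : Q → X → X}

/-- abbreviation for the disjoint-cycles hypothesis -/
def DisjCyc (π : Q → X → Q) (lo : Q → X → X) : Prop :=
  ∀ (p₁ : Q) (v₁ : List X) (p₂ : Q) (v₂ : List X),
    IsCycle π p₁ v₁ → ¬ IsTrivialCycle π lo p₁ v₁ →
    IsCycle π p₂ v₂ → ¬ IsTrivialCycle π lo p₂ v₂ →
    (∃ u : List X, reachState π p₁ u ∈ cycleVerts π p₂ v₂) →
    cycleEdges π p₁ v₁ = cycleEdges π p₂ v₂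

/-- two nontrivial closed walks based at nontrivially-acting states, one reachable
from the other, share their edge sets. -/
lemma edges_eq_of_reach (H : DisjCyc π lo) {t₁ t₂ : Q}
    (h₁ : ∃ w, stateAct π lo t₁ w ≠ w) (h₂ : ∃ w, stateAct π lo t₂ w ≠ w)
    {c₁ c₂ : List X} (n₁ : c₁ ≠ []) (e₁ : reachState π t₁ c₁ = t₁)
    (n₂ : c₂ ≠ []) (e₂ : reachState π t₂ c₂ = t₂)
    (hreach : ∃ u, reachState π t₁ u = t₂) :
    cycleEdges π t₁ c₁ = cycleEdges π t₂ c₂ := by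
  obtain ⟨u, hu⟩ := hreach
  exact H t₁ c₁ t₂ c₂ ⟨n₁, e₁⟩ (not_trivialCycle_of_nontriv π lo t₁ c₁ h₁)
    ⟨n₂, e₂⟩ (not_trivialCycle_of_nontriv π lo t₂ c₂ h₂)
    ⟨u, hu ▸ base_mem_cycleVerts π t₂ c₂⟩

/-- two closed walks based at the same nontrivially-acting state share edge sets. -/
lemma edges_eq_same_base (H : DisjCyc π lo) {t : Q}
    (ht : ∃ w, stateAct π lo t w ≠ w)
    {c₁ c₂ : List X} (n₁ : c₁ ≠ []) (e₁ : reachState π t c₁ = t)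
    (n₂ : c₂ ≠ []) (e₂ : reachState π t c₂ = t) :
    cycleEdges π t c₁ = cycleEdges π t c₂ :=
  edges_eq_of_reach H ht ht n₁ e₁ n₂ e₂ ⟨[], rfl⟩

/-- Lemma A: at a nontrivially-acting state on a closed walk, the outgoing
edge within the walk's edge set is unique. -/
lemma out_letter_unique (H : DisjCyc π lo) {t : Q}
    (ht : ∃ w, stateAct π lo t w ≠ w) :
    ∀ (N : ℕ) (c : List X), c.length ≤ N → c ≠ [] → reachState π t c = t →
      ∀ x x', (t, x) ∈ cycleEdges π t c → (t, x') ∈ cycleEdges π t c → x = x' := by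
  intro N
  induction N with
  | zero => intro c hc hne _; cases c <;> simp_all
  | succ N ih =>
    intro c hc hne hclosed x x' hx hx'
    obtain ⟨u, w, hcu, hu⟩ := hx
    obtain ⟨u', w', hcu', hu'⟩ := hx'
    rcases List.eq_nil_or_concat' u with rfl | _
    · rcases List.eq_nil_or_concat' u' with rfl | _
      · rw [hcu'] at hcu
        exact (List.cons.injEq .. ▸ hcu).1.symm
      · -- recurse into u'
        have hu'ne : u' ≠ [] := by rintro rfl; simp_all
        have hclosed' : reachState π t u' = t := hu'
        have hE : cycleEdges π t u' = cycleEdges π t c :=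
          edges_eq_same_base H ht hu'ne hclosed' hne hclosed
        have hlen : u'.length ≤ N := by
          have : c.length = u'.length + 1 + w'.length := by simp [hcu']; omega
          omega
        refine ih u' hlen hu'ne hclosed' x x' ?_ ?_
        · rw [hE]; exact ⟨[], w, hcu, hu⟩
        · rw [hE]; exact ⟨u', w', hcu', hu'⟩
    · -- recurse into u
      have hune : u ≠ [] := by rintro rfl; simp_all
      have hclosedu : reachState π t u = t := hu
      have hE : cycleEdges π t u = cycleEdges π t c :=
        edges_eq_same_base H ht hune hclosedu hne hclosed
      have hlen : u.length ≤ N := by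
        have : c.length = u.length + 1 + w.length := by simp [hcu]; omega
        omega
      refine ih u hlen hune hclosedu x x' ?_ ?_
      · rw [hE]; exact ⟨u, w, hcu, hu⟩
      · rw [hE]; exact ⟨u', w', hcu', hu'⟩

end Hdep
end SidkiAux

namespace SidkiAux
section C3

variable {Q X : Type*} {π : Q → X → Q} {lo : Q → X → X}

/-- state on the path labelled `v` from `q0` at time `m` -/
def st (π : Q → X → Q) (q0 : Q) (v : List X) (m : ℕ) : Q :=
  reachState π q0 (v.take m)

lemma reach_st_slice (q0 : Q) (v : List X) {a b : ℕ} (hab : a ≤ b) :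
    reachState π (st π q0 v a) (slice v a b) = st π q0 v b := by
  rw [st, st, ← reach_append, ← take_add_slice v hab]

lemma st_succ (q0 : Q) (v : List X) {r : ℕ} (hr : r < v.length) :
    st π q0 v (r+1) = π (st π q0 v r) v[r] := by
  rw [st, st, take_succ_elem v hr, reach_append]; rfl

/-- C3, case 1: if `r` lies inside a closed subwalk `[a,b)` of the path, there is
a closed walk at `st r` containing the edge `(st r, v[r])`. -/
lemma exists_cycle_edge_case1 (q0 : Q) (v : List X) {a r b : ℕ}
    (har : a ≤ r) (hrb : r < b) (hb : b ≤ v.length) (hab : st π q0 v a = st π q0 v b) :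
    ∃ c, c ≠ [] ∧ reachState π (st π q0 v r) c = st π q0 v r ∧
      (st π q0 v r, v[r]'(by omega)) ∈ cycleEdges π (st π q0 v r) c := by
  have hr : r < v.length := by omega
  refine ⟨v[r] :: (slice v (r+1) b ++ slice v a r), by simp, ?_, ?_⟩
  · have h1 : π (st π q0 v r) v[r] = st π q0 v (r+1) := (st_succ q0 v hr).symm
    rw [reach_cons, h1, reach_append, reach_st_slice q0 v (by omega : r+1 ≤ b), ← hab]
    exact reach_st_slice q0 v har
  · exact ⟨[], slice v (r+1) b ++ slice v a r, rfl, rfl⟩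

/-- C3, case 2: `r` lies in a "gap" between a closed subwalk `[a1,b1)` (ending at
`b1 ≤ r`) and a closed subwalk `[a2,J)` (starting at `a2 > r`). -/
lemma exists_cycle_edge_case2 (H : DisjCyc π lo) (q0 : Q) (v : List X) {a1 b1 r a2 J : ℕ}
    (h11 : a1 < b1) (h1r : b1 ≤ r) (hra : r < a2) (h2J : a2 < J) (hJ : J ≤ v.length)
    (hc1 : st π q0 v a1 = st π q0 v b1) (hc2 : st π q0 v a2 = st π q0 v J)
    (hnt1 : ∃ w, stateAct π lo (st π q0 v a1) w ≠ w)
    (hnt2 : ∃ w, stateAct π lo (st π q0 v a2) w ≠ w) :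
    ∃ c, c ≠ [] ∧ reachState π (st π q0 v r) c = st π q0 v r ∧
      (st π q0 v r, v[r]'(by omega)) ∈ cycleEdges π (st π q0 v r) c := by
  have hr : r < v.length := by omega
  -- the two closed walks
  have hW1closed : reachState π (st π q0 v a1) (slice v a1 b1) = st π q0 v a1 := by
    rw [reach_st_slice q0 v h11.le, hc1]
  have hW2closed : reachState π (st π q0 v a2) (slice v a2 J) = st π q0 v a2 := by
    rw [reach_st_slice q0 v h2J.le, hc2]
  have hW1ne : slice v a1 b1 ≠ [] := slice_ne_nil v h11 (by omega)
  have hW2ne : slice v a2 J ≠ [] := slice_ne_nil v h2J hJ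
  have hE : cycleEdges π (st π q0 v a1) (slice v a1 b1)
      = cycleEdges π (st π q0 v a2) (slice v a2 J) :=
    edges_eq_of_reach H hnt1 hnt2 hW1ne hW1closed hW2ne hW2closed
      ⟨slice v a1 a2, reach_st_slice q0 v (by omega)⟩
  -- the first edge of W2 lies in the common edge set
  have hW2split : slice v a2 J = [] ++ v[a2]'(by omega) :: slice v (a2+1) J := by
    have := slice_surgery v (le_refl a2) h2J (by omega)
    rwa [show slice v a2 a2 = [] from List.drop_eq_nil_of_le (by simp)] at this
  have hedge : (st π q0 v a2, v[a2]'(by omega)) ∈ cycleEdges π (st π q0 v a1) (slice v a1 b1) := by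
    rw [hE]; exact ⟨[], slice v (a2+1) J, hW2split, rfl⟩
  obtain ⟨u₀, w₀, hsplit, hu₀⟩ := hedge
  -- the return path: from st a2, reading v[a2] :: w₀ comes back to st b1
  have hreturn : reachState π (st π q0 v a2) (v[a2]'(by omega) :: w₀) = st π q0 v b1 := by
    have : reachState π (st π q0 v a1) (u₀ ++ v[a2]'(by omega) :: w₀) = st π q0 v a1 := by
      rw [← hsplit]; exact hW1closed
    rw [reach_append, hu₀] at this
    rw [this, hc1]
  refine ⟨v[r] :: ((slice v (r+1) a2 ++ (v[a2]'(by omega) :: w₀)) ++ slice v b1 r),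
    by simp, ?_, ?_⟩
  · have h1 : π (st π q0 v r) v[r] = st π q0 v (r+1) := (st_succ q0 v hr).symm
    rw [reach_cons, h1, reach_append, reach_append,
      reach_st_slice q0 v (by omega : r+1 ≤ a2), hreturn]
    exact reach_st_slice q0 v h1r
  · exact ⟨[], _, rfl, rfl⟩

end C3
end SidkiAux

namespace SidkiAux
section Backward

variable {Q X : Type*} {π : Q → X → Q} {lo : Q → X → X}

lemma pigeon {n : ℕ} (f : ℕ → Fin n) (N : ℕ) (hN : n < N + 1) :
    ∃ i j, i < j ∧ j ≤ N ∧ f i = f j := by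
  obtain ⟨i, j, hne, he⟩ := Fintype.exists_ne_map_eq_of_card_lt
    (fun i : Fin (N+1) => f i.val) (by simp; omega)
  rcases lt_or_gt_of_ne (fun h : i.val = j.val => hne (Fin.ext h)) with h | h
  · exact ⟨i, j, h, Nat.lt_succ_iff.mp j.isLt, he⟩
  · exact ⟨j, i, h, Nat.lt_succ_iff.mp i.isLt, he.symm⟩

/-- times that start a repeat -/
def RepI (π : Q → X → Q) (q0 : Q) (v : List X) : Set ℕ :=
  {i | ∃ j, i < j ∧ j ≤ v.length ∧ st π q0 v i = st π q0 v j}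

/-- times that end a repeat -/
def RepJ (π : Q → X → Q) (q0 : Q) (v : List X) : Set ℕ :=
  {j | j ≤ v.length ∧ ∃ i, i < j ∧ st π q0 v i = st π q0 v j}

open Classical in
noncomputable def Iv (π : Q → X → Q) (q0 : Q) (v : List X) : ℕ :=
  if (RepI π q0 v).Nonempty then sInf (RepI π q0 v) else v.length

open Classical in
noncomputable def Jv (π : Q → X → Q) (q0 : Q) (v : List X) : ℕ :=
  if (RepI π q0 v).Nonempty then sSup (RepJ π q0 v) else v.length

lemma RepJ_nonempty {q0 : Q} {v : List X} (h : (RepI π q0 v).Nonempty) :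
    (RepJ π q0 v).Nonempty := by
  obtain ⟨i, j, hij, hj, he⟩ := h
  exact ⟨j, hj, i, hij, he⟩

lemma RepJ_bdd (q0 : Q) (v : List X) : BddAbove (RepJ π q0 v) :=
  ⟨v.length, fun j hj => hj.1⟩

lemma Iv_mem {q0 : Q} {v : List X} (h : (RepI π q0 v).Nonempty) :
    Iv π q0 v ∈ RepI π q0 v := by
  rw [Iv, if_pos h]; exact Nat.sInf_mem h

lemma Iv_min {q0 : Q} {v : List X} (h : (RepI π q0 v).Nonempty) {i : ℕ}
    (hi : i ∈ RepI π q0 v) : Iv π q0 v ≤ i := by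
  rw [Iv, if_pos h]; exact Nat.sInf_le hi

lemma Jv_mem {q0 : Q} {v : List X} (h : (RepI π q0 v).Nonempty) :
    Jv π q0 v ∈ RepJ π q0 v := by
  rw [Jv, if_pos h]; exact Nat.sSup_mem (RepJ_nonempty h) (RepJ_bdd q0 v)

lemma Jv_max {q0 : Q} {v : List X} (h : (RepI π q0 v).Nonempty) {j : ℕ}
    (hj : j ∈ RepJ π q0 v) : j ≤ Jv π q0 v := by
  rw [Jv, if_pos h]; exact le_csSup (RepJ_bdd q0 v) hj

lemma Iv_neg {q0 : Q} {v : List X} (h : ¬ (RepI π q0 v).Nonempty) :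
    Iv π q0 v = v.length := by rw [Iv, if_neg h]

lemma Jv_neg {q0 : Q} {v : List X} (h : ¬ (RepI π q0 v).Nonempty) :
    Jv π q0 v = v.length := by rw [Jv, if_neg h]

/-- restriction computed by the automaton -/
lemma treeRestrict_eq_stateAct (q : Equiv.Perm (List X)) (q0 : Q)
    (hq0 : ∀ w, stateAct π lo q0 w = q w) (v w : List X) :
    treeRestrict q v w = stateAct π lo (reachState π q0 v) w := by
  show (q (v ++ w)).drop v.length = _
  rw [← hq0, stateAct_append,
    show v.length = (stateAct π lo q0 v).length from (stateAct_length ..).symm,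
    List.drop_left]

/-- every state along an "active" path acts nontrivially -/
lemma st_nontriv (q0 : Q) (v : List X)
    (hact : ∃ x, lo (reachState π q0 v) x ≠ x) {m : ℕ} (_ : m ≤ v.length) :
    ∃ w, stateAct π lo (st π q0 v m) w ≠ w := by
  apply nontriv_of_reach π lo _ (v.drop m)
  have : reachState π (st π q0 v m) (v.drop m) = reachState π q0 v := by
    rw [st, ← reach_append, List.take_append_drop]
  rw [this]
  obtain ⟨x, hx⟩ := hact
  exact ⟨[x], by simpa using hx⟩

theorem backward [Fintype X] (q : Equiv.Perm (List X))
    {n : ℕ} {π : Fin n → X → Fin n} {lo : Fin n → X → X} (q0 : Fin n)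
    (hq0 : ∀ w, stateAct π lo q0 w = q w) (H : DisjCyc π lo) : IsBoundedAut q := by
  classical
  set T : Set (List X × List X) :=
    {l : List X | l.length ≤ n} ×ˢ {l : List X | l.length ≤ n} with hT
  have hTfin : T.Finite := Set.Finite.prod (List.finite_length_le X n) (List.finite_length_le X n)
  refine ⟨T.ncard, fun k => ?_⟩
  set S : Set (List X) := {v | v.length = k ∧ ∃ x : X, treeRestrict q v [x] ≠ [x]} with hS
  -- membership facts
  have hSmem : ∀ v ∈ S, v.length = k ∧ ∃ x, lo (reachState π q0 v) x ≠ x := by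
    intro v hv
    refine ⟨hv.1, ?_⟩
    obtain ⟨x, hx⟩ := hv.2
    refine ⟨x, fun hc => hx ?_⟩
    rw [treeRestrict_eq_stateAct q q0 hq0]
    simp [hc]
  refine Set.ncard_le_ncard_of_injOn
    (fun v => (v.take (Iv π q0 v), v.drop (Jv π q0 v))) ?_ ?_ hTfin
  · -- maps to T
    intro v hv
    obtain ⟨hlen, hact⟩ := hSmem v hv
    by_cases hrep : (RepI π q0 v).Nonempty
    · constructor
      · -- Iv ≤ n
        show (v.take (Iv π q0 v)).length ≤ n
        obtain ⟨jI, hIj, hjlen, _⟩ := Iv_mem hrep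
        simp only [List.length_take]
        have : Iv π q0 v < n := by
          by_contra hn
          push_neg at hn
          obtain ⟨i, j, hij, hjn, he⟩ := pigeon (fun m => st π q0 v m) (Iv π q0 v)
            (by omega)
          have : Iv π q0 v ≤ i := Iv_min hrep ⟨j, hij, by omega, he⟩
          omega
        omega
      · show (v.drop (Jv π q0 v)).length ≤ n
        obtain ⟨hJlen, iJ, hiJ, _⟩ := Jv_mem hrep
        simp only [List.length_drop]
        by_contra hn
        push_neg at hn
        obtain ⟨i, j, hij, hjn, he⟩ := pigeon (fun m => st π q0 v (Jv π q0 v + m)) n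
          (by omega)
        have hmem : Jv π q0 v + j ∈ RepJ π q0 v :=
          ⟨by omega, Jv π q0 v + i, by omega, he⟩
        have := Jv_max hrep hmem
        omega
    · -- no repeats: k ≤ n
      have hkn : k ≤ n := by
        by_contra hn
        push_neg at hn
        obtain ⟨i, j, hij, hjn, he⟩ := pigeon (fun m => st π q0 v m) k (by omega)
        exact hrep ⟨i, j, hij, by omega, he⟩
      constructor
      · show (v.take _).length ≤ n
        simp only [List.length_take]; omega
      · show (v.drop _).length ≤ n
        simp only [List.length_drop]; omega
  · -- injective on S
    intro v hv v' hv' heq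
    obtain ⟨hlv, hact⟩ := hSmem v hv
    obtain ⟨hlv', hact'⟩ := hSmem v' hv'
    simp only [Prod.mk.injEq] at heq
    obtain ⟨heq1, heq2⟩ := heq
    by_cases hrep : (RepI π q0 v).Nonempty
    · by_cases hrep' : (RepI π q0 v').Nonempty
      · -- main case
        obtain ⟨jI, hIjI, hjIlen, heqI⟩ := Iv_mem hrep
        obtain ⟨hJlen, iJ, hiJJ, heqJ⟩ := Jv_mem hrep
        obtain ⟨jI', hIjI', hjIlen', heqI'⟩ := Iv_mem hrep'
        obtain ⟨hJlen', iJ', hiJJ', heqJ'⟩ := Jv_mem hrep'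
        have hIlt : Iv π q0 v < k := by omega
        have hIlt' : Iv π q0 v' < k := by omega
        have hII : Iv π q0 v = Iv π q0 v' := by
          have := congrArg List.length heq1
          simp only [List.length_take] at this
          omega
        have hJJ : Jv π q0 v = Jv π q0 v' := by
          have := congrArg List.length heq2
          simp only [List.length_drop] at this
          omega
        set I := Iv π q0 v with hIdef
        set J := Jv π q0 v with hJdef
        have hIJ : I < J := by
          have : jI ∈ RepJ π q0 v := ⟨hjIlen, I, hIjI, heqI⟩
          have := Jv_max hrep this
          omega
        -- the middle induction
        have claim : ∀ r, I ≤ r → r ≤ J → v.take r = v'.take r := by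
          intro r hIr
          induction r, hIr using Nat.le_induction with
          | base => intro _; rw [← hII] at heq1; exact heq1
          | succ r hIr ih =>
            intro hrJ
            have htk : v.take r = v'.take r := ih (by omega)
            have hrk : r < k := by omega
            have hrkv : r < v.length := by omega
            have hrkv' : r < v'.length := by omega
            have hst : st π q0 v r = st π q0 v' r := by
              show reachState π q0 (v.take r) = reachState π q0 (v'.take r)
              rw [htk]
            -- closed walk through (st r, v[r]) for v
            have hC3 : ∀ (u : List X) (hul : u.length = k)
                (hurep : (RepI π q0 u).Nonempty)
                (huI : Iv π q0 u = I) (huJ : Jv π q0 u = J)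
                (huact : ∃ x, lo (reachState π q0 u) x ≠ x),
                ∃ c, c ≠ [] ∧ reachState π (st π q0 u r) c = st π q0 u r ∧
                  (st π q0 u r, u[r]'(by omega)) ∈ cycleEdges π (st π q0 u r) c := by
              intro u hul hurep huI huJ huact
              by_cases hcase : ∃ a b, a ≤ r ∧ r < b ∧ b ≤ u.length ∧
                  st π q0 u a = st π q0 u b
              · obtain ⟨a, b, h1, h2, h3, h4⟩ := hcase
                exact exists_cycle_edge_case1 q0 u h1 h2 h3 h4
              · obtain ⟨jI0, hIjI0, hjIlen0, heqI0⟩ := Iv_mem hurep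
                obtain ⟨hJlen0, iJ0, hiJJ0, heqJ0⟩ := Jv_mem hurep
                rw [huI] at hIjI0 heqI0
                rw [huJ] at hJlen0 hiJJ0 heqJ0
                have hjIr : jI0 ≤ r := by
                  by_contra hcon
                  exact hcase ⟨I, jI0, hIr, by omega, hjIlen0, heqI0⟩
                have hriJ : r < iJ0 := by
                  by_contra hcon
                  exact hcase ⟨iJ0, J, by omega, by omega, hJlen0, heqJ0⟩
                exact exists_cycle_edge_case2 H q0 u (by omega) hjIr hriJ hiJJ0 hJlen0
                  heqI0 heqJ0
                  (st_nontriv q0 u huact (by omega))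
                  (st_nontriv q0 u huact (by omega))
            obtain ⟨c, hcne, hcclosed, hcedge⟩ := hC3 v hlv hrep rfl rfl hact
            obtain ⟨c', hcne', hcclosed', hcedge'⟩ := hC3 v' hlv' hrep' hII.symm
              (hJJ ▸ rfl) hact'
            rw [← hst] at hcclosed' hcedge'
            have hnt : ∃ w, stateAct π lo (st π q0 v r) w ≠ w :=
              st_nontriv q0 v hact (by omega)
            have hE : cycleEdges π (st π q0 v r) c = cycleEdges π (st π q0 v r) c' :=
              edges_eq_same_base H hnt hcne hcclosed hcne' hcclosed'
            have hxx : v[r]'hrkv = v'[r]'hrkv' := by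
              refine out_letter_unique H hnt c.length c le_rfl hcne hcclosed _ _ hcedge ?_
              rw [hE]; exact hcedge'
            rw [take_succ_elem v hrkv, take_succ_elem v' hrkv', htk, hxx]
        -- conclude
        have htake : v.take J = v'.take J := claim J (le_of_lt hIJ) le_rfl
        have hdrop : v.drop J = v'.drop J := by rw [← hJJ] at heq2; exact heq2
        calc v = v.take J ++ v.drop J := (List.take_append_drop ..).symm
          _ = v'.take J ++ v'.drop J := by rw [htake, hdrop]
          _ = v' := List.take_append_drop ..
      · -- v has repeats, v' does not: contradiction via lengths
        exfalso
        obtain ⟨jI, hIjI, hjIlen, _⟩ := Iv_mem hrep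
        have h1 := congrArg List.length heq1
        rw [Iv_neg hrep'] at h1
        simp only [List.length_take] at h1
        omega
    · by_cases hrep' : (RepI π q0 v').Nonempty
      · exfalso
        obtain ⟨jI, hIjI, hjIlen, _⟩ := Iv_mem hrep'
        have h1 := congrArg List.length heq1
        rw [Iv_neg hrep] at h1
        simp only [List.length_take] at h1
        omega
      · rw [Iv_neg hrep] at heq1
        rw [Iv_neg hrep'] at heq1
        rwa [List.take_length, List.take_length] at heq1

end Backward
end SidkiAux

namespace SidkiAux
section Pow

variable {Q X : Type*} (π : Q → X → Q)

/-- power of a word -/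
def lpow (c : List X) : ℕ → List X
  | 0 => []
  | P+1 => c ++ lpow c P

@[simp] lemma lpow_zero (c : List X) : lpow c 0 = [] := rfl
@[simp] lemma lpow_succ (c : List X) (P : ℕ) : lpow c (P+1) = c ++ lpow c P := rfl

@[simp] lemma lpow_length (c : List X) (P : ℕ) : (lpow c P).length = P * c.length := by
  induction P with
  | zero => simp [lpow]
  | succ P ih => simp [lpow, ih]; ring

lemma lpow_add (c : List X) (m P : ℕ) : lpow c (m + P) = lpow c m ++ lpow c P := by
  induction m with
  | zero => simp
  | succ m ih =>
    have : m + 1 + P = (m + P) + 1 := by omega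
    rw [this, lpow_succ, lpow_succ, ih, List.append_assoc]

lemma reach_lpow (p : Q) {c : List X} (hc : reachState π p c = p) (P : ℕ) :
    reachState π p (lpow c P) = p := by
  induction P with
  | zero => rfl
  | succ P ih => rw [lpow_succ, reach_append, hc, ih]

lemma edges_lpow_subset (p : Q) {c : List X} (hc : reachState π p c = p) (P : ℕ) :
    cycleEdges π p (lpow c P) ⊆ cycleEdges π p c := by
  induction P with
  | zero => rintro ⟨s, x⟩ ⟨u, w, hcu, hu⟩; exact absurd hcu (by simp)
  | succ P ih =>
    rintro ⟨s, x⟩ ⟨u, w, hcu, hu⟩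
    by_cases hle : u.length + 1 ≤ c.length
    · obtain ⟨g, hg⟩ := trunc_lemma hcu (lpow_succ c P) hle
      exact ⟨u, g, hg, hu⟩
    · have hcu' : c <+: u :=
        List.prefix_of_prefix_length_le ⟨lpow c P, (lpow_succ c P).symm⟩
          ⟨(s, x).2 :: w, hcu.symm⟩ (by omega)
      obtain ⟨u₂, hu₂⟩ := hcu'
      have hP : lpow c P = u₂ ++ (s, x).2 :: w := by
        have : c ++ lpow c P = c ++ (u₂ ++ (s, x).2 :: w) := by
          rw [← List.append_assoc, hu₂, ← hcu, lpow_succ]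
        exact List.append_cancel_left this
      refine ih ⟨u₂, w, hP, ?_⟩
      rw [← hu, ← hu₂, reach_append, hc]
  -- done

lemma edges_lpow (p : Q) {c : List X} (hc : reachState π p c = p) {P : ℕ} (hP : 1 ≤ P) :
    cycleEdges π p (lpow c P) = cycleEdges π p c := by
  refine subset_antisymm (edges_lpow_subset π p hc P) ?_
  rintro ⟨s, x⟩ ⟨u, w, hcu, hu⟩
  obtain ⟨P', rfl⟩ : ∃ P', P = P' + 1 := ⟨P - 1, by omega⟩
  exact ⟨u, w ++ lpow c P', by rw [lpow_succ, hcu]; simp, hu⟩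

lemma edges_rotate_subset (p : Q) (a b : List X) (hclosed : reachState π p (a ++ b) = p) :
    cycleEdges π p (a ++ b) ⊆ cycleEdges π (reachState π p a) (b ++ a) := by
  rintro ⟨s, x⟩ ⟨u, w, hl, hu⟩
  have hpb : reachState π (reachState π p a) b = p := by
    rw [← reach_append]; exact hclosed
  by_cases hle : u.length + 1 ≤ a.length
  · obtain ⟨g, hg⟩ := trunc_lemma hl rfl hle
    refine ⟨b ++ u, g, ?_, ?_⟩
    · rw [hg]; simp
    · rw [reach_append, hpb, hu]
  · have hau : a <+: u :=
      List.prefix_of_prefix_length_le ⟨b, rfl⟩ ⟨(s, x).2 :: w, hl.symm⟩ (by omega)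
    obtain ⟨u₂, hu₂⟩ := hau
    have hb : b = u₂ ++ (s, x).2 :: w := by
      have : a ++ b = a ++ (u₂ ++ (s, x).2 :: w) := by
        rw [← List.append_assoc, hu₂, ← hl]
      exact List.append_cancel_left this
    refine ⟨u₂, w ++ a, ?_, ?_⟩
    · rw [hb]; simp
    · rw [← hu, ← hu₂, reach_append]

lemma edges_rotate (p : Q) (a b : List X) (hclosed : reachState π p (a ++ b) = p) :
    cycleEdges π p (a ++ b) = cycleEdges π (reachState π p a) (b ++ a) := by
  refine subset_antisymm (edges_rotate_subset π p a b hclosed) ?_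
  have hpb : reachState π (reachState π p a) b = p := by
    rw [← reach_append]; exact hclosed
  have h2 : reachState π (reachState π p a) (b ++ a) = reachState π p a := by
    rw [reach_append, hpb]
  have := edges_rotate_subset π (reachState π p a) b a h2
  rwa [hpb] at this

end Pow
end SidkiAux

namespace SidkiAux
section Canonical

variable {X : Type*} (q : Equiv.Perm (List X))

/-- first-level restriction of a function on words -/
def restr1 (f : List X → List X) (x : X) : List X → List X := fun w => (f (x :: w)).drop 1

lemma restr1_treeRestrict (v : List X) (x : X) :
    restr1 (treeRestrict q v) x = treeRestrict q (v ++ [x]) := by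
  funext w
  show ((q (v ++ (x :: w))).drop v.length).drop 1 = (q ((v ++ [x]) ++ w)).drop (v ++ [x]).length
  rw [List.drop_drop, List.append_assoc]
  simp [Nat.add_comm]

lemma restr1_mem {f : List X → List X} (hf : f ∈ Set.range (treeRestrict q)) (x : X) :
    restr1 f x ∈ Set.range (treeRestrict q) := by
  obtain ⟨v, hv⟩ := hf
  exact ⟨v ++ [x], by rw [← hv, restr1_treeRestrict]⟩

lemma treeRestrict_length (haut : IsTreeAut q) (v w : List X) :
    (treeRestrict q v w).length = w.length := by
  simp [treeRestrict, haut.1]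

lemma treeRestrict_nil (haut : IsTreeAut q) (v : List X) : treeRestrict q v [] = [] :=
  List.length_eq_zero_iff.mp (treeRestrict_length q haut v [])

lemma treeRestrict_head (haut : IsTreeAut q) (v : List X) (x : X) (w : List X) :
    ∃ y t, treeRestrict q v [x] = [y] ∧ treeRestrict q v (x :: w) = y :: t ∧
      restr1 (treeRestrict q v) x w = t := by
  have hpre : q (v ++ [x]) <+: q (v ++ x :: w) := haut.2 _ _ ⟨w, by simp⟩
  obtain ⟨tail, htail⟩ := hpre
  have h1 : treeRestrict q v (x :: w) = treeRestrict q v [x] ++ tail := by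
    show (q (v ++ x :: w)).drop v.length = (q (v ++ [x])).drop v.length ++ tail
    rw [← htail, List.drop_append_of_le_length (by rw [haut.1]; simp)]
  have h2 : (treeRestrict q v [x]).length = 1 := treeRestrict_length q haut v [x]
  obtain ⟨y, hy⟩ := List.length_eq_one_iff.mp h2
  refine ⟨y, tail, hy, by rw [h1, hy]; rfl, ?_⟩
  show (treeRestrict q v (x :: w)).drop 1 = tail
  rw [h1, hy]; rfl

variable {n : ℕ} (e : ↥(Set.range (treeRestrict q)) ≃ Fin n)

/-- canonical automaton transition -/
noncomputable def cπ : Fin n → X → Fin n := fun i x =>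
  e ⟨restr1 ((e.symm i).1) x, restr1_mem q (e.symm i).2 x⟩

/-- canonical automaton output -/
noncomputable def clo : Fin n → X → X := fun i x => (((e.symm i).1) [x]).headD x

/-- canonical automaton initial state -/
noncomputable def cq0 : Fin n := e ⟨treeRestrict q [], ⟨[], rfl⟩⟩

lemma cπ_apply (s : ↥(Set.range (treeRestrict q))) (x : X) :
    cπ q e (e s) x = e ⟨restr1 s.1 x, restr1_mem q s.2 x⟩ := by
  simp [cπ]

lemma clo_apply (s : ↥(Set.range (treeRestrict q))) (x : X) :
    clo q e (e s) x = (s.1 [x]).headD x := by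
  simp [clo]

lemma c_stateAct (haut : IsTreeAut q) :
    ∀ (w : List X) (s : ↥(Set.range (treeRestrict q))),
      stateAct (cπ q e) (clo q e) (e s) w = s.1 w := by
  intro w
  induction w with
  | nil =>
    intro s
    obtain ⟨v, hv⟩ := s.2
    show [] = s.1 []
    rw [← hv, treeRestrict_nil q haut]
  | cons x w ih =>
    intro s
    obtain ⟨v, hv⟩ := s.2
    obtain ⟨y, t, hy, ht, hr⟩ := treeRestrict_head q haut v x w
    rw [hv] at hy ht hr
    simp only [stateAct_cons]
    rw [cπ_apply, clo_apply, ih ⟨restr1 s.1 x, restr1_mem q s.2 x⟩]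
    show (s.1 [x]).headD x :: restr1 s.1 x w = s.1 (x :: w)
    rw [hy, ht, hr]
    rfl

lemma c_stateAct_q0 (haut : IsTreeAut q) (w : List X) :
    stateAct (cπ q e) (clo q e) (cq0 q e) w = q w := by
  rw [cq0, c_stateAct q e haut w ⟨treeRestrict q [], ⟨[], rfl⟩⟩]
  show (q ([] ++ w)).drop 0 = q w
  simp

lemma c_reach_aux (v : List X) : ∀ (v0 : List X),
    reachState (cπ q e) (e ⟨treeRestrict q v0, ⟨v0, rfl⟩⟩) v
      = e ⟨treeRestrict q (v0 ++ v), ⟨v0 ++ v, rfl⟩⟩ := by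
  induction v with
  | nil => intro v0; simp
  | cons x v ih =>
    intro v0
    rw [reach_cons, cπ_apply]
    have hval : (⟨restr1 (treeRestrict q v0) x, restr1_mem q ⟨v0, rfl⟩ x⟩ :
        ↥(Set.range (treeRestrict q))) = ⟨treeRestrict q (v0 ++ [x]), ⟨v0 ++ [x], rfl⟩⟩ :=
      Subtype.ext (restr1_treeRestrict q v0 x)
    rw [hval, ih (v0 ++ [x])]
    congr 1
    exact Subtype.ext (by rw [List.append_assoc]; rfl)

lemma c_reach (v : List X) :
    reachState (cπ q e) (cq0 q e) v = e ⟨treeRestrict q v, ⟨v, rfl⟩⟩ := by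
  have := c_reach_aux q e v []
  simpa [cq0] using this

/-- every state of the canonical automaton is reachable -/
lemma c_reachable (i : Fin n) : ∃ g, reachState (cπ q e) (cq0 q e) g = i := by
  obtain ⟨g, hg⟩ := (e.symm i).2
  refine ⟨g, ?_⟩
  rw [c_reach]
  have : (⟨treeRestrict q g, ⟨g, rfl⟩⟩ : ↥(Set.range (treeRestrict q))) = e.symm i :=
    Subtype.ext hg
  rw [this, Equiv.apply_symm_apply]

/-- uniqueness of the trivially-acting state in the canonical automaton -/
lemma c_trivial_unique (haut : IsTreeAut q) (s s' : Fin n)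
    (hs : ∀ w, stateAct (cπ q e) (clo q e) s w = w)
    (hs' : ∀ w, stateAct (cπ q e) (clo q e) s' w = w) : s = s' := by
  have hval : ∀ (i : Fin n), (∀ w, stateAct (cπ q e) (clo q e) i w = w) →
      ∀ w, (e.symm i).1 w = w := by
    intro i hi w
    have := c_stateAct q e haut w (e.symm i)
    rw [Equiv.apply_symm_apply] at this
    rw [← this, hi w]
  have : (e.symm s).1 = (e.symm s').1 := by
    funext w; rw [hval s hs w, hval s' hs' w]
  have h2 : e.symm s = e.symm s' := Subtype.ext this
  exact e.symm.injective h2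

/-- a nontrivial cycle in the canonical automaton contains a vertex acting
nontrivially -/
lemma c_nontriv_vertex (haut : IsTreeAut q) (p : Fin n) (c : List X)
    (hnt : ¬ IsTrivialCycle (cπ q e) (clo q e) p c) :
    ∃ s ∈ cycleVerts (cπ q e) p c, ∃ w, stateAct (cπ q e) (clo q e) s w ≠ w := by
  by_contra hcon
  push_neg at hcon
  have htriv : ∀ s ∈ cycleVerts (cπ q e) p c, ∀ w, stateAct (cπ q e) (clo q e) s w = w :=
    hcon
  have hp : ∀ w, stateAct (cπ q e) (clo q e) p w = w :=
    htriv p (base_mem_cycleVerts _ p c)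
  refine hnt ⟨p, ?_, hp⟩
  ext s
  simp only [Set.mem_singleton_iff]
  constructor
  · intro hs
    exact c_trivial_unique q e haut s p (htriv s hs) hp
  · rintro rfl
    exact base_mem_cycleVerts _ _ c

end Canonical

/-- from a nontrivially-acting state one can reach an "active" state -/
lemma active_reach {Q X : Type*} (π : Q → X → Q) (lo : Q → X → X) :
    ∀ (w : List X) (s : Q), stateAct π lo s w ≠ w →
      ∃ z x, lo (reachState π s z) x ≠ x := by
  intro w
  induction w with
  | nil => intro s hs; exact absurd rfl hs
  | cons x w ih =>
    intro s hs
    by_cases hx : lo s x = x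
    · have : stateAct π lo (π s x) w ≠ w := by
        intro hc; exact hs (by rw [stateAct_cons, hx, hc])
      obtain ⟨z, x', hz⟩ := ih (π s x) this
      exact ⟨x :: z, x', hz⟩
    · exact ⟨[], x, hx⟩

end SidkiAux

namespace SidkiAux
section Extract

variable {Q X : Type*} (π : Q → X → Q)

/-- Key extraction lemma: if the same word reads, from `p₁`, both as
`u ++ R-power ++ tail` and as `A-power ++ u ++ tail'`, where `(p₁,A)` and
`(t,R)` are closed, then the edge sets of the two cycles coincide. -/
lemma edges_eq_of_word_eq {p₁ t : Q} {u A R tail tail' : List X} {N PR : ℕ}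
    (hA : reachState π p₁ A = p₁) (hu : reachState π p₁ u = t)
    (hR : reachState π t R = t)
    (hN : 2 ≤ N) (hPR : 1 ≤ PR)
    (hua : u.length < A.length)
    (h1 : u.length + R.length ≤ N * A.length)
    (h2 : 2 * A.length ≤ PR * R.length)
    (heq : u ++ (lpow R PR ++ tail) = lpow A N ++ (u ++ tail')) :
    cycleEdges π p₁ A = cycleEdges π t R := by
  apply subset_antisymm
  · -- E(A) ⊆ E(R)
    rintro ⟨s, x⟩ ⟨α, γ, hsplit, hα⟩
    simp only at hsplit hα
    obtain ⟨N₂, rfl⟩ : ∃ N₂, N = N₂ + 2 := ⟨N - 2, by omega⟩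
    have h3 : lpow A (N₂ + 2) = (A ++ α) ++ x :: (γ ++ lpow A N₂) := by
      have hh : lpow A (N₂ + 2) = lpow A 1 ++ (lpow A 1 ++ lpow A N₂) := by
        rw [← lpow_add, ← lpow_add]
        congr 1
        omega
      rw [hh]
      simp only [lpow, List.append_nil]
      nth_rewrite 2 [hsplit]
      simp [List.append_assoc]
    have hYeq : u ++ (lpow R PR ++ tail)
        = (A ++ α) ++ x :: (γ ++ (lpow A N₂ ++ (u ++ tail'))) := by
      rw [heq, h3]
      simp [List.append_assoc]
    have hαlen : α.length < A.length := by
      have := congrArg List.length hsplit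
      simp at this; omega
    have hpref : u <+: A ++ α :=
      List.prefix_of_prefix_length_le ⟨_, rfl⟩
        ⟨x :: (γ ++ (lpow A N₂ ++ (u ++ tail'))), hYeq.symm⟩
        (by simp only [List.length_append]; omega)
    obtain ⟨D, hD⟩ := hpref
    have hcancel : lpow R PR ++ tail = D ++ x :: (γ ++ (lpow A N₂ ++ (u ++ tail'))) := by
      apply List.append_cancel_left (as := u)
      rw [hYeq, ← hD, List.append_assoc]
    have hDlen : D.length + 1 ≤ (lpow R PR).length := by
      have hl := congrArg List.length hD
      simp only [List.length_append] at hl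
      rw [lpow_length]
      omega
    obtain ⟨g, hg⟩ := trunc_lemma hcancel rfl hDlen
    have hreach : reachState π t D = s := by
      rw [← hu, ← reach_append, hD, reach_append, hA, hα]
    rw [← edges_lpow π t hR hPR]
    exact ⟨D, g, hg, hreach⟩
  · -- E(R) ⊆ E(A)
    rintro ⟨s, x⟩ ⟨α, γ, hsplit, hα⟩
    simp only at hsplit hα
    obtain ⟨PR₂, rfl⟩ : ∃ PR₂, PR = PR₂ + 1 := ⟨PR - 1, by omega⟩
    have h3 : lpow R (PR₂ + 1) = α ++ x :: (γ ++ lpow R PR₂) := by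
      rw [lpow_succ, hsplit]
      simp [List.append_assoc]
    have hαlen : α.length < R.length := by
      have := congrArg List.length hsplit
      simp at this; omega
    have hYeq : lpow A N ++ (u ++ tail')
        = (u ++ α) ++ x :: (γ ++ (lpow R PR₂ ++ tail)) := by
      rw [← heq, h3]
      simp [List.append_assoc]
    have hlen : (u ++ α).length + 1 ≤ (lpow A N).length := by
      simp only [List.length_append]
      rw [lpow_length]
      omega
    obtain ⟨g, hg⟩ := trunc_lemma hYeq rfl hlen
    have hreach : reachState π p₁ (u ++ α) = s := by
      rw [reach_append, hu, hα]
    rw [← edges_lpow π p₁ hA (by omega : 1 ≤ N)]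
    exact ⟨u ++ α, g, hg, hreach⟩

end Extract
end SidkiAux

namespace SidkiAux

theorem forward {X : Type*} [Fintype X] (q : Equiv.Perm (List X))
    (haut : IsTreeAut q) (hfs : IsFiniteState q) (hbnd : IsBoundedAut q) :
    ∃ (n : ℕ) (π : Fin n → X → Fin n) (lo : Fin n → X → X) (q0 : Fin n),
      (∀ w : List X, stateAct π lo q0 w = q w) ∧ DisjCyc π lo := by
  classical
  haveI : Fintype ↥(Set.range (treeRestrict q)) := hfs.fintype
  set n := Fintype.card ↥(Set.range (treeRestrict q)) with hn
  set e : ↥(Set.range (treeRestrict q)) ≃ Fin n := Fintype.equivFin _ with he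
  refine ⟨n, cπ q e, clo q e, cq0 q e, c_stateAct_q0 q e haut, ?_⟩
  intro p₁ v₁ p₂ v₂ hc1 hnt1 hc2 hnt2 hconn
  by_contra hne
  obtain ⟨u, hu⟩ := hconn
  set t := reachState (cπ q e) p₁ u with ht
  obtain ⟨pre, ⟨post, hsplit⟩, hpre⟩ := hu
  set ρ := post ++ pre with hρdef
  have hρlen : ρ.length = v₂.length := by
    have := congrArg List.length hsplit
    simp only [List.length_append] at this ⊢
    rw [hρdef]; simp only [List.length_append]; omega
  have hρclosed : reachState (cπ q e) t ρ = t := by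
    calc reachState (cπ q e) t (post ++ pre)
        = reachState (cπ q e) (reachState (cπ q e) p₂ (pre ++ post)) pre := by
          rw [reach_append, reach_append, hpre]
      _ = t := by rw [hsplit, hc2.2, hpre]
  have hE2 : cycleEdges (cπ q e) p₂ v₂ = cycleEdges (cπ q e) t ρ := by
    rw [← hsplit, edges_rotate _ p₂ pre post (by rw [hsplit]; exact hc2.2), hpre]
  -- a nontrivially-acting vertex on the rotated cycle (t, ρ)
  have hp2mem : p₂ ∈ cycleVerts (cπ q e) t ρ := by
    refine ⟨post, ⟨pre, rfl⟩, ?_⟩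
    rw [← hpre, ← reach_append, hsplit]; exact hc2.2
  have hntρ : ¬ IsTrivialCycle (cπ q e) (clo q e) t ρ := by
    rintro ⟨s0, hverts, hs0⟩
    have htp : t = s0 := by
      have := base_mem_cycleVerts (cπ q e) t ρ
      rwa [hverts, Set.mem_singleton_iff] at this
    have hp2s : p₂ = s0 := by rwa [hverts, Set.mem_singleton_iff] at hp2mem
    have hp2triv : ∀ w, stateAct (cπ q e) (clo q e) p₂ w = w := hp2s ▸ hs0
    apply hnt2
    refine ⟨p₂, ?_, hp2triv⟩
    ext s
    simp only [Set.mem_singleton_iff]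
    constructor
    · rintro ⟨w', hw', rfl⟩
      exact c_trivial_unique q e haut _ p₂ (trivial_reach _ _ p₂ hp2triv w') hp2triv
    · rintro rfl
      exact base_mem_cycleVerts _ _ v₂
  obtain ⟨s₂, hs₂mem, hs₂nt⟩ := c_nontriv_vertex q e haut t ρ hntρ
  obtain ⟨pre', _, hs₂⟩ := hs₂mem
  obtain ⟨w₀, hw₀⟩ := hs₂nt
  obtain ⟨z, x₀, hx₀⟩ := active_reach _ _ w₀ s₂ hw₀
  obtain ⟨g, hg⟩ := c_reachable q e p₁
  -- inflate cycle 1 so that it is longer than u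
  set A := lpow v₁ (u.length + 1) with hAdef
  have hAclosed : reachState (cπ q e) p₁ A = p₁ := reach_lpow _ p₁ hc1.2 _
  have hv₁pos : 1 ≤ v₁.length := List.length_pos_iff.mpr hc1.1
  have haA : u.length < A.length := by
    rw [hAdef, lpow_length]; nlinarith
  have hEA : cycleEdges (cπ q e) p₁ A = cycleEdges (cπ q e) p₁ v₁ :=
    edges_lpow _ p₁ hc1.2 (by omega)
  have hapos : 1 ≤ A.length := by omega
  have hbpos : 1 ≤ ρ.length := by
    rw [hρlen]; exact List.length_pos_iff.mpr hc2.1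
  -- boundedness data
  obtain ⟨m, hC⟩ := hbnd
  -- the family of words
  set W : ℕ → List X := fun j =>
    g ++ (lpow A (j * (2 * ρ.length)) ++ (u ++
      (lpow ρ ((m - j + 2) * (2 * A.length)) ++ (pre' ++ z)))) with hW
  set K := g.length + (m + 2) * (2 * ρ.length) * A.length +
    (u.length + (pre'.length + z.length)) with hK
  have hWlen : ∀ j, j ≤ m → (W j).length = K := by
    intro j hj
    obtain ⟨i, rfl⟩ : ∃ i, m = j + i := ⟨m - j, by omega⟩
    simp only [hW, hK, List.length_append, lpow_length, Nat.add_sub_cancel_left]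
    ring
  have hWreach : ∀ j, reachState (cπ q e) (cq0 q e) (W j)
      = reachState (cπ q e) s₂ z := by
    intro j
    simp only [hW, reach_append]
    rw [hg, reach_lpow _ p₁ hAclosed, ← ht, reach_lpow _ t hρclosed, hs₂]
  have hq0' : ∀ w, stateAct (cπ q e) (clo q e) (cq0 q e) w = q w :=
    c_stateAct_q0 q e haut
  have hmem : ∀ j, j ≤ m → W j ∈ {v : List X | v.length = K ∧
      ∃ x : X, treeRestrict q v [x] ≠ [x]} := by
    intro j hj
    refine ⟨hWlen j hj, x₀, ?_⟩
    rw [treeRestrict_eq_stateAct q (cq0 q e) hq0', hWreach j]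
    simp only [stateAct_cons, stateAct_nil, ne_eq, List.cons.injEq, and_true]
    exact hx₀
  -- distinctness
  have hinj : ∀ j j', j ≤ m → j' ≤ m → j < j' → W j ≠ W j' := by
    intro j j' hj hj' hjj hWeq
    simp only [hW] at hWeq
    have step1 := List.append_cancel_left hWeq
    have hsplitN : j' * (2 * ρ.length)
        = j * (2 * ρ.length) + (j' - j) * (2 * ρ.length) := by
      rw [← Nat.add_mul]; congr 1; omega
    rw [hsplitN, lpow_add, List.append_assoc] at step1
    have step2 := List.append_cancel_left step1
    -- numeric facts
    have h2bN : 2 * ρ.length ≤ (j' - j) * (2 * ρ.length) := by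
      have := Nat.mul_le_mul_right (2 * ρ.length) (show 1 ≤ j' - j by omega)
      simpa using this
    have hN : 2 ≤ (j' - j) * (2 * ρ.length) := by omega
    have hPR : 1 ≤ (m - j + 2) * (2 * A.length) := by
      exact Nat.mul_pos (by omega) (by omega)
    have hab : A.length + ρ.length ≤ 2 * ρ.length * A.length := by
      obtain ⟨a', ha'⟩ : ∃ a', A.length = a' + 1 := ⟨A.length - 1, by omega⟩
      obtain ⟨b', hb'⟩ : ∃ b', ρ.length = b' + 1 := ⟨ρ.length - 1, by omega⟩
      rw [ha', hb']
      nlinarith [Nat.zero_le (a' * b')]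
    have h1 : u.length + ρ.length ≤ (j' - j) * (2 * ρ.length) * A.length := by
      calc u.length + ρ.length ≤ A.length + ρ.length := by omega
        _ ≤ 2 * ρ.length * A.length := hab
        _ ≤ (j' - j) * (2 * ρ.length) * A.length :=
            Nat.mul_le_mul_right A.length h2bN
    have h2 : 2 * A.length ≤ (m - j + 2) * (2 * A.length) * ρ.length := by
      calc 2 * A.length ≤ (m - j + 2) * (2 * A.length) := by
            have := Nat.mul_le_mul_right (2 * A.length) (show 1 ≤ m - j + 2 by omega)
            simpa using this
        _ = (m - j + 2) * (2 * A.length) * 1 := (mul_one _).symm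
        _ ≤ (m - j + 2) * (2 * A.length) * ρ.length :=
            Nat.mul_le_mul_left _ hbpos
    have hkey := edges_eq_of_word_eq (cπ q e) hAclosed ht.symm hρclosed hN hPR haA
      h1 h2 step2
    exact hne (by rw [← hEA, hkey, ← hE2])
  -- counting: m+1 distinct active words at level K contradict the bound
  have hCK := hC K
  have hfinS : ({v : List X | v.length = K ∧ ∃ x : X, treeRestrict q v [x] ≠ [x]}).Finite :=
    (List.finite_length_eq X K).subset (fun v hv => hv.1)
  have hsub : ↑((Finset.range (m+1)).image W) ⊆
      {v : List X | v.length = K ∧ ∃ x : X, treeRestrict q v [x] ≠ [x]} := by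
    intro v hv
    simp only [Finset.coe_image, Set.mem_image, Finset.mem_coe, Finset.mem_range] at hv
    obtain ⟨j, hj, rfl⟩ := hv
    exact hmem j (by omega)
  have hcard : ((Finset.range (m+1)).image W).card = m + 1 := by
    rw [Finset.card_image_of_injOn, Finset.card_range]
    intro j hj j' hj' hWeq
    simp only [Finset.mem_coe, Finset.mem_range] at hj hj'
    by_contra hjj
    rcases lt_or_gt_of_ne hjj with h | h
    · exact hinj j j' (by omega) (by omega) h hWeq
    · exact hinj j' j (by omega) (by omega) h hWeq.symm
  have hge : m + 1 ≤
      ({v : List X | v.length = K ∧ ∃ x : X, treeRestrict q v [x] ≠ [x]}).ncard := by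
    have h1 : (↑((Finset.range (m+1)).image W) : Set (List X)).ncard = m + 1 := by
      rw [Set.ncard_coe_finset, hcard]
    rw [← h1]
    exact Set.ncard_le_ncard hsub hfinS
  omega

end SidkiAux

/-- A finite-state automorphism `q` of the rooted tree `X^*`
over a finite alphabet is bounded if and only if `q` is defined by some finite
automaton in whose Moore diagram every two non-trivial cycles are disjoint and
not connected by a directed path (formally: any two non-trivial cycles, one of
which is reachable from the other, coincide — they have the same edges). -/
theorem bounded_iff_automaton_with_disjoint_cycles
    {X : Type*} [Fintype X] (q : Equiv.Perm (List X))
    (haut : IsTreeAut q) (hfs : IsFiniteState q) :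
    IsBoundedAut q ↔
      ∃ (n : ℕ) (π : Fin n → X → Fin n) (lo : Fin n → X → X) (q0 : Fin n),
        (∀ w : List X, stateAct π lo q0 w = q w) ∧
        ∀ (p₁ : Fin n) (v₁ : List X) (p₂ : Fin n) (v₂ : List X),
          IsCycle π p₁ v₁ → ¬ IsTrivialCycle π lo p₁ v₁ →
          IsCycle π p₂ v₂ → ¬ IsTrivialCycle π lo p₂ v₂ →
          (∃ u : List X, reachState π p₁ u ∈ cycleVerts π p₂ v₂) →
          cycleEdges π p₁ v₁ = cycleEdges π p₂ v₂ := by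
  constructor
  · intro hb
    obtain ⟨n, π, lo, q0, h1, h2⟩ := SidkiAux.forward q haut hfs hb
    exact ⟨n, π, lo, q0, h1, h2⟩
  · rintro ⟨n, π, lo, q0, h1, h2⟩
    exact SidkiAux.backward q q0 h1 h2
end
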